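/- arXiv:math/0103094 — 4 statements merged into one kernel-verified Lean document; each statement's English description precedes it below -/
import Mathlib

section
/- Deletion–restriction for chambers: let 𝒜 be a hyperplane arrangement in ℝ^n with more than one hyperplane, H ∈ 𝒜, 𝒜' = 𝒜 \ {H}, and 𝒜'' the arrangement in H consisting of the intersections H ∩ K for K ∈ 𝒜'. Then the number of chambers of ℝ^n \ 𝒜 equals the number of chambers of ℝ^n \ 𝒜' plus the number of chambers of H \ 𝒜''. -/
/-!
A chamber of a finite family `g` of affine hyperplanes is an open convex cell
`⋂ i, {±gᵢ > 0}`, indexed by its sign vector, so the chambers of `g` inside a convex set `Y`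
correspond to the sign vectors whose cell meets `Y`. Let `R₊`, `R₋` be the sign vectors
whose cell meets the side `{f > 0}`, resp. `{f < 0}`, of the new hyperplane. An open convex
cell meets `{f = 0}` iff it meets both sides (move off the hyperplane along a direction in
which `f` varies; conversely, intermediate value theorem), and it is nonempty iff it meets
one side. Hence the arrangement with `{f = 0}` has `|R₊| + |R₋|` chambers, the one without
it has `|R₊ ∪ R₋|`, the restriction to `{f = 0}` has `|R₊ ∩ R₋|`, and
`|R₊| + |R₋| = |R₊ ∪ R₋| + |R₊ ∩ R₋|`.
-/

open Set

theorem Nat.card_connectedComponents_eq_card_range {X I : Type*} [TopologicalSpace X]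
    (s : X → I) (hopen : ∀ i, IsOpen (s ⁻¹' {i})) (hpre : ∀ i, IsPreconnected (s ⁻¹' {i})) :
    Nat.card (ConnectedComponents X) = Nat.card (range s) :=
  Nat.card_congr <| ConnectedComponents.equivOfIsClopenOfIsConnected
    (U := fun i : range s => s ⁻¹' {i.1})
    (fun i => (IsLocallyConstant.iff_isOpen_fiber.2 hopen).isClopen_fiber i.1)
    (fun _ _ hij => Disjoint.preimage s (disjoint_singleton.2 (Subtype.coe_ne_coe.2 hij)))
    (iUnion_eq_univ_iff.2 fun x => ⟨⟨s x, mem_range_self x⟩, rfl⟩)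
    (fun ⟨_, x, hx⟩ => ⟨⟨x, hx⟩, hpre _⟩)

theorem card_connectedComponents_eq_ncard_of_convex_fibers {V I : Type*} [AddCommGroup V]
    [Module ℝ V] [TopologicalSpace V] [ContinuousAdd V] [ContinuousSMul ℝ V] {S : Set V}
    (s : S → I) (C : I → Set V)
    (hs : ∀ (x : S) i, s x = i ↔ x.1 ∈ C i) (hopen : ∀ i, IsOpen (C i))
    (hconv : ∀ i, Convex ℝ (S ∩ C i)) :
    Nat.card (ConnectedComponents S) = {i | (S ∩ C i).Nonempty}.ncard := by
  have hfiber : ∀ i, s ⁻¹' {i} = Subtype.val ⁻¹' C i := fun i => Set.ext fun x => hs x i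
  rw [Nat.card_connectedComponents_eq_card_range s, ← Nat.card_coe_set_eq]
  · congr
    ext i
    simp [hs, Set.Nonempty]
  · intro i
    rw [hfiber]
    exact (hopen i).preimage continuous_subtype_val
  · intro i
    rw [hfiber, ← Topology.IsInducing.subtypeVal.isPreconnected_image,
      Subtype.image_preimage_coe]
    exact (hconv i).isPreconnected

theorem Set.ncard_setOf_mem_prod_bool {α : Type*} [Finite α] (R : Bool → Set α) :
    {p : α × Bool | p.1 ∈ R p.2}.ncard = (R true).ncard + (R false).ncard := by
  have hsplit : {p : α × Bool | p.1 ∈ R p.2}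
      = (·, true) '' R true ∪ (·, false) '' R false := by
    ext ⟨a, b⟩
    cases b <;> simp
  rw [hsplit, ncard_union_eq, ncard_image_of_injective _ (Prod.mk_left_injective true),
    ncard_image_of_injective _ (Prod.mk_left_injective false)]
  exact disjoint_left.2 fun _ ⟨_, _, h⟩ ⟨_, _, h'⟩ => by simp [← h] at h'

namespace AffineArrangement

variable {V ι : Type*} [AddCommGroup V] [Module ℝ V] [TopologicalSpace V]

def openHalfSpace (f : V →ᴬ[ℝ] ℝ) : Bool → Set V
  | true => {x | 0 < f x}
  | false => {x | f x < 0}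

def cell (g : ι → V →ᴬ[ℝ] ℝ) (σ : ι → Bool) : Set V :=
  ⋂ i, openHalfSpace (g i) (σ i)

def complement (g : ι → V →ᴬ[ℝ] ℝ) : Set V :=
  {x | ∀ i, g i x ≠ 0}

noncomputable def signVector (g : ι → V →ᴬ[ℝ] ℝ) (x : V) : ι → Bool :=
  fun i => decide (0 < g i x)

def realizedSigns (g : ι → V →ᴬ[ℝ] ℝ) (Y : Set V) : Set (ι → Bool) :=
  {σ | (Y ∩ cell g σ).Nonempty}

theorem isOpen_openHalfSpace (f : V →ᴬ[ℝ] ℝ) (b : Bool) : IsOpen (openHalfSpace f b) := by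
  cases b
  · exact isOpen_lt f.continuous continuous_const
  · exact isOpen_lt continuous_const f.continuous

theorem convex_openHalfSpace (f : V →ᴬ[ℝ] ℝ) (b : Bool) : Convex ℝ (openHalfSpace f b) := by
  cases b
  · exact (convex_Iio 0).affine_preimage f.toAffineMap
  · exact (convex_Ioi 0).affine_preimage f.toAffineMap

theorem map_ne_zero_of_mem_openHalfSpace {f : V →ᴬ[ℝ] ℝ} {b : Bool} {x : V}
    (hx : x ∈ openHalfSpace f b) : f x ≠ 0 := by
  cases b
  · exact (hx : f x < 0).ne
  · exact (hx : 0 < f x).ne'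

theorem mem_openHalfSpace_iff {f : V →ᴬ[ℝ] ℝ} {x : V} (hx : f x ≠ 0) (b : Bool) :
    x ∈ openHalfSpace f b ↔ decide (0 < f x) = b := by
  cases b
  · simpa [openHalfSpace] using hx.le_iff_lt.symm
  · simp [openHalfSpace]

theorem isOpen_cell [Finite ι] (g : ι → V →ᴬ[ℝ] ℝ) (σ : ι → Bool) : IsOpen (cell g σ) :=
  isOpen_iInter_of_finite fun i => isOpen_openHalfSpace (g i) (σ i)

theorem convex_cell (g : ι → V →ᴬ[ℝ] ℝ) (σ : ι → Bool) : Convex ℝ (cell g σ) :=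
  convex_iInter fun i => convex_openHalfSpace (g i) (σ i)

theorem cell_subset_complement (g : ι → V →ᴬ[ℝ] ℝ) (σ : ι → Bool) :
    cell g σ ⊆ complement g := fun _ hx i =>
  map_ne_zero_of_mem_openHalfSpace (mem_iInter.1 hx i)

theorem mem_cell_iff {g : ι → V →ᴬ[ℝ] ℝ} {x : V} (hx : x ∈ complement g) (σ : ι → Bool) :
    x ∈ cell g σ ↔ signVector g x = σ := by
  simp only [cell, mem_iInter, funext_iff, signVector, mem_openHalfSpace_iff (hx _)]

section Geometry

variable [IsTopologicalAddGroup V] [ContinuousSMul ℝ V]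

theorem inter_openHalfSpace_nonempty_of_map_eq_zero {f : V →ᴬ[ℝ] ℝ} (hf : f.contLinear ≠ 0)
    {U : Set V} (hU : IsOpen U) {z : V} (hzU : z ∈ U) (hz : f z = 0) (b : Bool) :
    (openHalfSpace f b ∩ U).Nonempty := by
  obtain ⟨v, hv⟩ : ∃ v, f.contLinear v = 1 := by
    obtain ⟨w, hw⟩ := DFunLike.ne_iff.1 hf
    exact ⟨(f.contLinear w)⁻¹ • w, by rw [map_smul, smul_eq_mul, inv_mul_cancel₀ hw]⟩
  have hline : ∀ t : ℝ, f (t • v + z) = t := fun t => by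
    rw [← vadd_eq_add, f.map_vadd, map_smul, hv, hz, smul_eq_mul, mul_one, vadd_eq_add, add_zero]
  have hnhds : (fun t : ℝ => t • v + z) ⁻¹' U ∈ nhds (0 : ℝ) :=
    (by fun_prop : Continuous fun t : ℝ => t • v + z).continuousAt.preimage_mem_nhds
      (by simpa using hU.mem_nhds hzU)
  obtain ⟨ε, hε, hball⟩ := Metric.mem_nhds_iff.1 hnhds
  have hmem : ∀ t, |t| < ε → t • v + z ∈ U := fun t ht =>
    hball (by simpa [Real.dist_eq] using ht)
  cases b
  · refine ⟨(-(ε / 2)) • v + z, ?_, hmem _ ?_⟩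
    · show f _ < 0
      rw [hline]; linarith
    · rw [abs_neg, abs_of_pos (half_pos hε)]; linarith
  · refine ⟨(ε / 2) • v + z, ?_, hmem _ ?_⟩
    · show 0 < f _
      rw [hline]; linarith
    · rw [abs_of_pos (half_pos hε)]; linarith

theorem zeroSet_inter_nonempty_iff {f : V →ᴬ[ℝ] ℝ} (hf : f.contLinear ≠ 0) {U : Set V}
    (hU : IsOpen U) (hU' : IsPreconnected U) :
    ({x | f x = 0} ∩ U).Nonempty ↔ ∀ b, (openHalfSpace f b ∩ U).Nonempty := by
  refine ⟨fun ⟨z, hz, hzU⟩ => inter_openHalfSpace_nonempty_of_map_eq_zero hf hU hzU hz, ?_⟩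
  intro h
  obtain ⟨x, hx, hxU⟩ := h true
  obtain ⟨y, hy, hyU⟩ := h false
  obtain ⟨z, hzU, hz⟩ := hU'.intermediate_value hyU hxU f.continuous.continuousOn
    ⟨(hy : f y < 0).le, (hx : 0 < f x).le⟩
  exact ⟨z, hz, hzU⟩

theorem nonempty_iff_exists_openHalfSpace_inter {f : V →ᴬ[ℝ] ℝ} (hf : f.contLinear ≠ 0)
    {U : Set V} (hU : IsOpen U) :
    U.Nonempty ↔ ∃ b, (openHalfSpace f b ∩ U).Nonempty := by
  refine ⟨fun ⟨z, hzU⟩ => ?_, fun ⟨_, hb⟩ => hb.mono inter_subset_right⟩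
  by_cases hz : f z = 0
  · exact ⟨true, inter_openHalfSpace_nonempty_of_map_eq_zero hf hU hzU hz true⟩
  · exact ⟨_, z, (mem_openHalfSpace_iff hz _).2 rfl, hzU⟩

end Geometry

section Counting

variable [IsTopologicalAddGroup V] [ContinuousSMul ℝ V] [Finite ι]

theorem card_connectedComponents_inter_complement (g : ι → V →ᴬ[ℝ] ℝ) {Y : Set V}
    (hY : Convex ℝ Y) :
    Nat.card (ConnectedComponents ↥(Y ∩ complement g)) = (realizedSigns g Y).ncard := by
  have hcell : ∀ σ, Y ∩ complement g ∩ cell g σ = Y ∩ cell g σ := fun σ => by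
    rw [inter_assoc, inter_eq_right.2 (cell_subset_complement g σ)]
  rw [card_connectedComponents_eq_ncard_of_convex_fibers (fun x => signVector g x.1) (cell g)
    (fun x σ => (mem_cell_iff x.2.2 σ).symm) (isOpen_cell g)
    (fun σ => by rw [hcell]; exact hY.inter (convex_cell g σ))]
  simp only [hcell, realizedSigns]

theorem card_connectedComponents_openHalfSpaces_inter_complement (g : ι → V →ᴬ[ℝ] ℝ)
    (f : V →ᴬ[ℝ] ℝ) :
    Nat.card (ConnectedComponents ↥({x | f x ≠ 0} ∩ complement g))
      = (realizedSigns g (openHalfSpace f true)).ncard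
        + (realizedSigns g (openHalfSpace f false)).ncard := by
  have hpiece : ∀ p : (ι → Bool) × Bool,
      {x | f x ≠ 0} ∩ complement g ∩ (cell g p.1 ∩ openHalfSpace f p.2)
        = openHalfSpace f p.2 ∩ cell g p.1 := fun p => by
    have hsub : cell g p.1 ∩ openHalfSpace f p.2 ⊆ {x | f x ≠ 0} ∩ complement g :=
      fun _ hx => ⟨map_ne_zero_of_mem_openHalfSpace hx.2, cell_subset_complement g p.1 hx.1⟩
    rw [inter_eq_right.2 hsub, inter_comm]
  rw [card_connectedComponents_eq_ncard_of_convex_fibers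
    (fun x : ↥({x | f x ≠ 0} ∩ complement g) => (signVector g x.1, decide (0 < f x.1)))
    (fun p => cell g p.1 ∩ openHalfSpace f p.2)
    (fun x p => by rw [Prod.ext_iff, mem_inter_iff, mem_cell_iff x.2.2,
      mem_openHalfSpace_iff x.2.1])
    (fun p => (isOpen_cell g p.1).inter (isOpen_openHalfSpace f p.2))
    (fun p => by rw [hpiece]; exact (convex_openHalfSpace f p.2).inter (convex_cell g p.1))]
  simp only [hpiece]
  exact Set.ncard_setOf_mem_prod_bool fun b => realizedSigns g (openHalfSpace f b)

theorem card_connectedComponents_deletion_restriction (g : ι → V →ᴬ[ℝ] ℝ)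
    {f : V →ᴬ[ℝ] ℝ} (hf : f.contLinear ≠ 0) :
    Nat.card (ConnectedComponents ↥({x | f x ≠ 0} ∩ complement g))
      = Nat.card (ConnectedComponents ↥(complement g))
        + Nat.card (ConnectedComponents ↥({x | f x = 0} ∩ complement g)) := by
  have hcell : ∀ σ, IsOpen (cell g σ) := isOpen_cell g
  have hrealized : realizedSigns g univ
      = realizedSigns g (openHalfSpace f false) ∪ realizedSigns g (openHalfSpace f true) := by
    ext σ
    simp [realizedSigns, nonempty_iff_exists_openHalfSpace_inter hf (hcell σ)]
  have hrealized_zero : realizedSigns g {x | f x = 0}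
      = realizedSigns g (openHalfSpace f false) ∩ realizedSigns g (openHalfSpace f true) := by
    ext σ
    simp [realizedSigns, zeroSet_inter_nonempty_iff hf (hcell σ) (convex_cell g σ).isPreconnected]
  have hhyperplane : Convex ℝ {x | f x = 0} := (convex_singleton 0).affine_preimage f.toAffineMap
  rw [card_connectedComponents_openHalfSpaces_inter_complement,
    card_connectedComponents_inter_complement g hhyperplane, ← univ_inter (complement g),
    card_connectedComponents_inter_complement g convex_univ, hrealized, hrealized_zero,
    ncard_union_add_ncard_inter, add_comm]

theorem card_connectedComponents_deletion_restriction_finset [DecidableEq (Set V)]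
    {A : Finset (Set V)} (f : Set V → V →ᴬ[ℝ] ℝ) (hmem : ∀ K ∈ A, ∀ x, x ∈ K ↔ f K x = 0)
    {H : Set V} (hH : H ∈ A) (hf : (f H).contLinear ≠ 0) :
    Nat.card (ConnectedComponents ↥{x | ∀ K ∈ A, x ∉ K})
      = Nat.card (ConnectedComponents ↥{x | ∀ K ∈ A.erase H, x ∉ K})
        + Nat.card (ConnectedComponents ↥{x | x ∈ H ∧ ∀ K ∈ A.erase H, x ∉ K}) := by
  let g := fun K : ↥(A.erase H) => f K
  have hcompl : {x | ∀ K ∈ A.erase H, x ∉ K} = complement g := by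
    ext x
    simp only [mem_ofPred_eq, complement, Subtype.forall, g]
    exact forall₂_congr fun K hK => not_congr (hmem K (Finset.mem_of_mem_erase hK) x)
  have hdel : {x | ∀ K ∈ A, x ∉ K} = {x | f H x ≠ 0} ∩ complement g := by
    rw [← hcompl]
    ext x
    rw [mem_inter_iff, mem_ofPred_eq, mem_ofPred_eq, mem_ofPred_eq]
    conv_lhs => rw [← Finset.insert_erase hH, Finset.forall_mem_insert]
    exact and_congr_left' (not_congr (hmem H hH x))
  have hres : {x | x ∈ H ∧ ∀ K ∈ A.erase H, x ∉ K} = {x | f H x = 0} ∩ complement g := by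
    rw [← hcompl]
    ext x
    exact and_congr_left' (hmem H hH x)
  rw [hdel, hres, hcompl]
  exact card_connectedComponents_deletion_restriction g hf

end Counting

end AffineArrangement

theorem exists_continuousAffineMap_sum_mul_sub {n : ℕ} {a : Fin n → ℝ} (ha : a ≠ 0) (c : ℝ) :
    ∃ f : (Fin n → ℝ) →ᴬ[ℝ] ℝ, f.contLinear ≠ 0 ∧ ∀ x, ∑ i, a i * x i = c ↔ f x = 0 := by
  set ℓ : (Fin n → ℝ) →L[ℝ] ℝ := ∑ i, a i • ContinuousLinearMap.proj i
  have hℓ : ∀ x, ℓ x = ∑ i, a i * x i := fun x => by simp [ℓ]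
  refine ⟨ℓ.toContinuousAffineMap - ContinuousAffineMap.const ℝ _ c, ?_, fun x => ?_⟩
  · obtain ⟨j, hj⟩ := Function.ne_iff.1 ha
    rw [ContinuousAffineMap.sub_contLinear, ContinuousAffineMap.const_contLinear, sub_zero,
      ContinuousLinearMap.toContinuousAffineMap_contLinear]
    intro h0
    apply hj
    simpa [hℓ, Pi.single_apply] using congrArg (fun φ => φ (Pi.single j 1)) h0
  · simp [hℓ, sub_eq_zero]

open Classical in
theorem deletion_restriction_chambers_general
    (n : ℕ) (A : Finset (Set (Fin n → ℝ)))
    (hhyp : ∀ H ∈ A, ∃ (a : Fin n → ℝ) (c : ℝ), a ≠ 0 ∧ H = {x | ∑ i, a i * x i = c})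
    (H : Set (Fin n → ℝ)) (hH : H ∈ A) :
    Nat.card (ConnectedComponents ↥{x : Fin n → ℝ | ∀ K ∈ A, x ∉ K})
      = Nat.card (ConnectedComponents ↥{x : Fin n → ℝ | ∀ K ∈ A.erase H, x ∉ K})
        + Nat.card (ConnectedComponents ↥{x : Fin n → ℝ | x ∈ H ∧ ∀ K ∈ A.erase H, x ∉ K}) := by
  have hA : ∀ K ∈ A, ∃ f : (Fin n → ℝ) →ᴬ[ℝ] ℝ, f.contLinear ≠ 0 ∧ ∀ x, x ∈ K ↔ f x = 0 := by
    intro K hK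
    obtain ⟨a, c, ha, rfl⟩ := hhyp K hK
    exact exists_continuousAffineMap_sum_mul_sub ha c
  choose! f hf hmem using hA
  exact AffineArrangement.card_connectedComponents_deletion_restriction_finset f hmem hH (hf H hH)

open Classical in
/-- **deletion–restriction for chambers.**
Let `A` be a finite set of affine hyperplanes in `ℝ^n` with more than one hyperplane,
`H ∈ A`, `A' = A \ {H}`, and `A''` the arrangement induced on `H` by intersecting the
hyperplanes of `A'` with `H`.  Then the number of chambers (connected components of the
complement) of `A` equals the number of chambers of `A'` plus the number of chambers
of the complement of `A''` inside `H`. -/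
theorem deletion_restriction_chambers
    (n : ℕ) (A : Finset (Set (Fin n → ℝ)))
    (hhyp : ∀ H ∈ A, ∃ (a : Fin n → ℝ) (c : ℝ), a ≠ 0 ∧ H = {x | ∑ i, a i * x i = c})
    (hcard : 1 < A.card) (H : Set (Fin n → ℝ)) (hH : H ∈ A) :
    Nat.card (ConnectedComponents ↥{x : Fin n → ℝ | ∀ K ∈ A, x ∉ K})
      = Nat.card (ConnectedComponents ↥{x : Fin n → ℝ | ∀ K ∈ A.erase H, x ∉ K})
        + Nat.card (ConnectedComponents ↥{x : Fin n → ℝ | x ∈ H ∧ ∀ K ∈ A.erase H, x ∉ K}) :=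
  deletion_restriction_chambers_general n A hhyp H hH
end

section
/- For a finite Coxeter group G acting on ℝ^n, the number of chambers of the reflection arrangement (complement of the union of reflection hyperplanes) equals the order |G| of the group. -/
/-- An element of `GL_n(ℝ)` is a reflection if it has order 2 and fixes a hyperplane
(a subspace of dimension `n − 1`) pointwise. -/
def IsReflection {n : ℕ} (σ : Matrix.GeneralLinearGroup (Fin n) ℝ) : Prop :=
  σ ≠ 1 ∧ σ * σ = 1 ∧
    Module.finrank ℝ
      (LinearMap.ker (Matrix.toLin' (σ : Matrix (Fin n) (Fin n) ℝ) - LinearMap.id)) = n - 1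

/-!
Averaging the dot product over `G` gives a `G`-invariant inner product `⟪·, ·⟫`, for which every
reflection of `G` is orthogonal: `s x = x - 2⟪α, x⟫ α` for a unit vector `α`, a root. The chambers
are then the classes of regular points under "strictly on the same side of every root hyperplane"
(classes are convex, and a root functional cannot change sign inside a connected set).

Fix a regular point `x₀`. The group acts transitively on chambers: `g` maximising `⟪g x₀, y⟫` puts
`g x₀` in the chamber of `y`, because the reflection in a separating hyperplane would increase it.
For freeness take a minimal set `Δ` of positive roots whose cone contains every positive root.
A simple reflection `s_δ` permutes the positive roots other than `δ`; this makes the `s_δ` generate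
`G` (a positive root of least height in its orbit is simple) and gives the exchange condition,
so a shortest word in the `s_δ` for an element preserving the positive roots is empty.
-/

open Matrix

section Action

variable {n : ℕ}

instance : DistribMulAction (GL (Fin n) ℝ) (Fin n → ℝ) where
  smul g x := (g : Matrix (Fin n) (Fin n) ℝ) *ᵥ x
  one_smul := one_mulVec
  mul_smul _ _ x := (mulVec_mulVec x _ _).symm
  smul_zero _ := mulVec_zero _
  smul_add _ := mulVec_add _

instance : SMulCommClass (GL (Fin n) ℝ) ℝ (Fin n → ℝ) where
  smul_comm _ c x := mulVec_smul _ c x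

instance : FaithfulSMul (GL (Fin n) ℝ) (Fin n → ℝ) where
  eq_of_smul_eq_smul h := Units.ext <| toLin'.injective <| LinearMap.ext h

end Action

namespace PointedCone

variable {V : Type*} [AddCommGroup V] [Module ℝ V] {f : V →ₗ[ℝ] ℝ} {s : Set V} {v : V}

theorem apply_nonneg_of_mem_hull (hs : ∀ u ∈ s, 0 ≤ f u) (hv : v ∈ hull ℝ s) : 0 ≤ f v :=
  (Submodule.span_le (p := (positive ℝ ℝ).comap f)).mpr hs hv

theorem eq_zero_or_apply_pos_of_mem_hull (hs : ∀ u ∈ s, 0 < f u) (hv : v ∈ hull ℝ s) :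
    v = 0 ∨ 0 < f v := by
  induction hv using Submodule.span_induction with
  | mem u hu => exact .inr (hs u hu)
  | zero => exact .inl rfl
  | add u w _ _ hu hw =>
    rcases hu with rfl | hu <;> rcases hw with rfl | hw
    · simp
    · simp [hw]
    · simp [hu]
    · exact .inr (by rw [map_add]; positivity)
  | smul a u _ hu =>
    rcases hu with rfl | hu
    · simp
    rcases a.2.eq_or_lt with ha | ha
    · left; rw [← Nonneg.coe_smul, ← ha, zero_smul]
    · right; rw [← Nonneg.coe_smul, map_smul, smul_eq_mul]; positivity

theorem exists_smul_add_of_mem_hull [DecidableEq V] {Δ : Finset V} {δ : V} (hδ : δ ∈ Δ)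
    (hv : v ∈ hull ℝ (Δ : Set V)) :
    ∃ t : ℝ, 0 ≤ t ∧ ∃ w ∈ hull ℝ (Δ.erase δ : Set V), v = t • δ + w := by
  rw [← Finset.insert_erase hδ, Finset.coe_insert] at hv
  obtain ⟨t, w, hw, rfl⟩ := Submodule.mem_span_insert.mp hv
  exact ⟨t, t.2, w, hw, by rw [Nonneg.coe_smul]⟩

end PointedCone

section ReflectionGroup

variable {n : ℕ} (G : Subgroup (GL (Fin n) ℝ)) [Fintype G]

noncomputable def invariantForm : LinearMap.BilinForm ℝ (Fin n → ℝ) :=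
  ∑ g : G, (dotProductBilin ℝ ℝ).compl₁₂ (DistribSMul.toLinearMap ℝ _ g)
    (DistribSMul.toLinearMap ℝ _ g)

local notation "⟪" x ", " y "⟫" => invariantForm G x y

variable {G}

theorem invariantForm_apply (x y : Fin n → ℝ) : ⟪x, y⟫ = ∑ g : G, (g • x) ⬝ᵥ (g • y) := by
  simp [invariantForm, LinearMap.sum_apply]

theorem invariantForm_comm (x y : Fin n → ℝ) : ⟪x, y⟫ = ⟪y, x⟫ := by
  simp only [invariantForm_apply, dotProduct_comm]

theorem invariantForm_self_pos {x : Fin n → ℝ} (hx : x ≠ 0) : 0 < ⟪x, x⟫ := by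
  rw [invariantForm_apply]
  exact Finset.sum_pos' (fun g _ => dotProduct_self_star_nonneg (g • x))
    ⟨1, Finset.mem_univ _, by simpa using dotProduct_self_star_pos_iff.mpr hx⟩

theorem invariantForm_smul_smul (g : G) (x y : Fin n → ℝ) : ⟪g • x, g • y⟫ = ⟪x, y⟫ := by
  simp only [invariantForm_apply, smul_smul]
  exact Fintype.sum_equiv (Equiv.mulRight g) _ _ fun _ => rfl

theorem invariantForm_smul_left (g : G) (x y : Fin n → ℝ) : ⟪g • x, y⟫ = ⟪x, g⁻¹ • y⟫ := by
  rw [← invariantForm_smul_smul g⁻¹, inv_smul_smul]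

variable (G) in
def IsRoot (α : Fin n → ℝ) : Prop :=
  ⟪α, α⟫ = 1 ∧ ∃ s : G, ∀ x, s • x = x - (2 * ⟪α, x⟫) • α

open Classical in
variable (G) in
/-- The reflection of `G` in the hyperplane `α^⊥`; it is the junk value `1` unless `α` is a root. -/
noncomputable def rootReflection (α : Fin n → ℝ) : G :=
  if h : IsRoot G α then h.2.choose else 1

variable {α β : Fin n → ℝ}

theorem rootReflection_smul (hα : IsRoot G α) (x : Fin n → ℝ) :
    rootReflection G α • x = x - (2 * ⟪α, x⟫) • α := by
  rw [rootReflection, dif_pos hα]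
  exact hα.2.choose_spec x

theorem eq_rootReflection (hα : IsRoot G α) {s : G}
    (hs : ∀ x, s • x = x - (2 * ⟪α, x⟫) • α) : s = rootReflection G α :=
  eq_of_smul_eq_smul fun x => by rw [hs, rootReflection_smul hα]

theorem IsRoot.ne_zero (hα : IsRoot G α) : α ≠ 0 := by
  rintro rfl
  simpa using hα.1

theorem rootReflection_smul_self (hα : IsRoot G α) : rootReflection G α • α = -α := by
  rw [rootReflection_smul hα, hα.1]
  module

theorem rootReflection_mul_self (hα : IsRoot G α) :
    rootReflection G α * rootReflection G α = 1 :=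
  eq_of_smul_eq_smul fun x : Fin n → ℝ => by
    rw [mul_smul, one_smul, rootReflection_smul hα, rootReflection_smul hα]
    simp only [map_sub, map_smul, smul_eq_mul, hα.1]
    module

theorem IsRoot.neg (hα : IsRoot G α) : IsRoot G (-α) := by
  refine ⟨by simpa using hα.1, rootReflection G α, fun x => ?_⟩
  rw [rootReflection_smul hα, map_neg, LinearMap.neg_apply]
  module

theorem rootReflection_neg (hα : IsRoot G α) : rootReflection G (-α) = rootReflection G α := by
  refine (eq_rootReflection hα.neg fun x => ?_).symm
  rw [rootReflection_smul hα, map_neg, LinearMap.neg_apply]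
  module

theorem smul_rootReflection_inv_smul (g : G) (hα : IsRoot G α) (x : Fin n → ℝ) :
    (g * rootReflection G α * g⁻¹) • x = x - (2 * ⟪g • α, x⟫) • g • α := by
  rw [mul_smul, mul_smul, rootReflection_smul hα, smul_sub, smul_inv_smul, smul_comm,
    invariantForm_smul_left]

theorem IsRoot.smul (g : G) (hα : IsRoot G α) : IsRoot G (g • α) :=
  ⟨by rw [invariantForm_smul_smul, hα.1], _, smul_rootReflection_inv_smul g hα⟩

theorem rootReflection_smul_eq (g : G) (hα : IsRoot G α) :
    rootReflection G (g • α) = g * rootReflection G α * g⁻¹ :=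
  (eq_rootReflection (hα.smul g) (smul_rootReflection_inv_smul g hα)).symm

theorem eq_or_eq_neg_of_eq_smul (hα : ⟪α, α⟫ = 1) (hβ : ⟪β, β⟫ = 1) {c : ℝ} (h : β = c • α) :
    β = α ∨ β = -α := by
  have hc : c * c = 1 := by simpa [h, hα, mul_assoc] using hβ
  rcases mul_self_eq_one_iff.mp hc with rfl | rfl <;> simp [h]

theorem eq_or_eq_neg_of_rootReflection_eq (hα : IsRoot G α) (hβ : IsRoot G β)
    (h : rootReflection G α = rootReflection G β) : β = α ∨ β = -α := by
  have h2 := rootReflection_smul_self hβ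
  rw [← h, rootReflection_smul hα] at h2
  exact eq_or_eq_neg_of_eq_smul hα.1 hβ.1 (by linear_combination (norm := module) (2⁻¹ : ℝ) • h2)

theorem finite_setOf_isRoot : {α | IsRoot G α}.Finite := by
  refine Set.Finite.of_finite_fibers (rootReflection G) (Set.toFinite _) ?_
  rintro _ ⟨α, hα, rfl⟩
  refine (Set.toFinite {α, -α}).subset fun β ⟨hβ, h⟩ => ?_
  exact eq_or_eq_neg_of_rootReflection_eq hα hβ h.symm

theorem rootReflection_smul_eq_self_iff (hα : IsRoot G α) {x : Fin n → ℝ} :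
    rootReflection G α • x = x ↔ ⟪α, x⟫ = 0 := by
  simp [rootReflection_smul hα, hα.ne_zero]

theorem mem_ker_toLin'_sub_id {σ : GL (Fin n) ℝ} {x : Fin n → ℝ} :
    x ∈ LinearMap.ker (toLin' (σ : Matrix (Fin n) (Fin n) ℝ) - LinearMap.id) ↔ σ • x = x := by
  rw [LinearMap.mem_ker, LinearMap.sub_apply, toLin'_apply, LinearMap.id_apply, sub_eq_zero]
  rfl

theorem finrank_ker_invariantForm (hα : α ≠ 0) :
    Module.finrank ℝ (LinearMap.ker (invariantForm G α)) = n - 1 := by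
  have hne : invariantForm G α ≠ 0 := fun h =>
    (invariantForm_self_pos hα).ne' (by simpa using LinearMap.congr_fun h α)
  have := Module.Dual.finrank_ker_add_one_of_ne_zero hne
  rw [Module.finrank_fin_fun] at this
  omega

theorem ker_toLin'_sub_id_rootReflection (hα : IsRoot G α) :
    LinearMap.ker (toLin' ((rootReflection G α : GL (Fin n) ℝ) : Matrix (Fin n) (Fin n) ℝ) -
      LinearMap.id) = LinearMap.ker (invariantForm G α) := by
  ext x
  rw [mem_ker_toLin'_sub_id, ← Subgroup.smul_def, rootReflection_smul_eq_self_iff hα,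
    LinearMap.mem_ker]

theorem isReflection_rootReflection (hα : IsRoot G α) :
    IsReflection (rootReflection G α : GL (Fin n) ℝ) := by
  refine ⟨fun h => hα.ne_zero ?_,
    by rw [← Subgroup.coe_mul, rootReflection_mul_self hα, Subgroup.coe_one],
    by rw [ker_toLin'_sub_id_rootReflection hα, finrank_ker_invariantForm hα.ne_zero]⟩
  have := rootReflection_smul_self hα
  rw [Subgroup.smul_def, h, one_smul] at this
  exact self_eq_neg.mp this

theorem exists_smul_invariantForm_self_eq_one {a : Fin n → ℝ} (ha : a ≠ 0) :
    ∃ c : ℝ, ⟪c • a, c • a⟫ = 1 := by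
  refine ⟨(√⟪a, a⟫)⁻¹, ?_⟩
  have hpos := invariantForm_self_pos (G := G) ha
  simp only [map_smul, LinearMap.smul_apply, smul_eq_mul]
  field_simp
  rw [Real.sq_sqrt hpos.le]

/-- `α` is a normalised `(-1)`-eigenvector of `s`; the fixed hyperplane of `s` is orthogonal to
`α`, hence equal to `α^⊥` by counting dimensions. -/
theorem exists_isRoot_of_isReflection {s : G} (hs : IsReflection (s : GL (Fin n) ℝ)) :
    ∃ α, IsRoot G α ∧ rootReflection G α = s := by
  obtain ⟨hne, hsq, hrank⟩ := hs
  obtain ⟨x, hx⟩ : ∃ x : Fin n → ℝ, s • x ≠ x := by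
    by_contra! h
    exact hne (eq_of_smul_eq_smul fun x : Fin n → ℝ => by rw [← Subgroup.smul_def, h, one_smul])
  have ha : x - s • x ≠ 0 := sub_ne_zero.mpr hx.symm
  obtain ⟨c, hc⟩ := exists_smul_invariantForm_self_eq_one (G := G) ha
  set α := c • (x - s • x)
  have hsα : s • α = -α := by
    have : s * s = 1 := Subtype.ext hsq
    rw [smul_comm s c, smul_sub, ← mul_smul, this, one_smul, ← smul_neg, neg_sub]
  clear_value α
  have hα : α ≠ 0 := fun h => by simp [h] at hc
  have hker : LinearMap.ker (toLin' ((s : GL (Fin n) ℝ) : Matrix (Fin n) (Fin n) ℝ) -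
      LinearMap.id) = LinearMap.ker (invariantForm G α) := by
    refine Submodule.eq_of_le_of_finrank_eq (fun k hk => ?_)
      (by rw [hrank, finrank_ker_invariantForm hα])
    rw [mem_ker_toLin'_sub_id, ← Subgroup.smul_def] at hk
    have := invariantForm_smul_smul s α k
    rw [hsα, hk, map_neg, LinearMap.neg_apply, neg_eq_iff_add_eq_zero, ← two_mul] at this
    simpa using this
  have hformula : ∀ y, s • y = y - (2 * ⟪α, y⟫) • α := by
    intro y
    have hy : y - ⟪α, y⟫ • α ∈ LinearMap.ker (invariantForm G α) := by
      simp [hc]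
    rw [← hker, mem_ker_toLin'_sub_id, ← Subgroup.smul_def, smul_sub, smul_comm s, hsα] at hy
    generalize s • y = z at hy ⊢
    linear_combination (norm := module) hy
  have hroot : IsRoot G α := ⟨hc, s, hformula⟩
  exact ⟨α, hroot, (eq_rootReflection hroot hformula).symm⟩

variable (G) in
def regularPoints : Set (Fin n → ℝ) := {x | ∀ α, IsRoot G α → ⟪α, x⟫ ≠ 0}

theorem setOf_isReflection_eq_regularPoints :
    {x : Fin n → ℝ | ∀ σ ∈ G, IsReflection σ → (σ : Matrix (Fin n) (Fin n) ℝ) *ᵥ x ≠ x} =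
      regularPoints G := by
  ext x
  refine ⟨fun hx α hα h0 => ?_, fun hx σ hσ hrefl hfix => ?_⟩
  · exact hx _ (rootReflection G α).2 (isReflection_rootReflection hα)
      ((rootReflection_smul_eq_self_iff hα).mpr h0)
  · obtain ⟨α, hα, hs⟩ := exists_isRoot_of_isReflection (s := ⟨σ, hσ⟩) hrefl
    exact hx α hα ((rootReflection_smul_eq_self_iff hα).mp (hs ▸ hfix))

theorem regularPoints_nonempty : (regularPoints G).Nonempty := by
  have : Finite {α // IsRoot G α} := finite_setOf_isRoot.to_subtype
  by_contra h
  obtain ⟨⟨α, hα⟩, htop⟩ := Subspace.exists_eq_top_of_iUnion_eq_univ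
    (p := fun α : {α // IsRoot G α} => LinearMap.ker (invariantForm G α)) <|
    Set.eq_univ_of_forall fun x => by
      have : x ∉ regularPoints G := fun hx => h ⟨x, hx⟩
      simp only [regularPoints, Set.mem_ofPred_eq, not_forall, not_not] at this
      obtain ⟨α, hα, h0⟩ := this
      exact Set.mem_iUnion.mpr ⟨⟨α, hα⟩, h0⟩
  have : α ∈ LinearMap.ker (invariantForm G α) := htop ▸ Submodule.mem_top
  simp [hα.1] at this

theorem smul_mem_regularPoints (g : G) {x : Fin n → ℝ} (hx : x ∈ regularPoints G) :
    g • x ∈ regularPoints G := fun α hα => by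
  rw [← invariantForm_smul_smul g⁻¹, inv_smul_smul]
  exact hx _ (hα.smul g⁻¹)

variable (G) in
def SameSide (x y : Fin n → ℝ) : Prop := ∀ α, IsRoot G α → 0 < ⟪α, x⟫ * ⟪α, y⟫

theorem convex_setOf_sameSide (x : Fin n → ℝ) : Convex ℝ {y | SameSide G x y} := by
  intro y hy z hz a b ha hb hab α hα
  have : ⟪α, x⟫ * ⟪α, a • y + b • z⟫ = a * (⟪α, x⟫ * ⟪α, y⟫) + b * (⟪α, x⟫ * ⟪α, z⟫) := by
    simp only [map_add, map_smul, smul_eq_mul]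
    ring
  rw [this]
  rcases ha.lt_or_eq with ha | rfl
  · exact add_pos_of_pos_of_nonneg (mul_pos ha (hy α hα)) (mul_nonneg hb (hz α hα).le)
  · simp only [zero_add] at hab
    simpa [hab] using hz α hα

theorem connectedComponentsMk_eq_iff_sameSide {x y : regularPoints G} :
    ConnectedComponents.mk x = ConnectedComponents.mk y ↔ SameSide G x y := by
  constructor
  · intro h α hα
    by_contra! hle
    have hpre : IsPreconnected (connectedComponent y) := isPreconnected_connectedComponent
    have hf : Continuous fun p : regularPoints G => ⟪α, p⟫ :=
      (LinearMap.continuous_of_finiteDimensional _).comp continuous_subtype_val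
    have hx : x ∈ connectedComponent y := ConnectedComponents.coe_eq_coe'.mp h
    have h0 : (0 : ℝ) ∈ (fun p : regularPoints G => ⟪α, p⟫) '' connectedComponent y := by
      rcases mul_nonpos_iff.mp hle with ⟨hx0, hy0⟩ | ⟨hx0, hy0⟩
      · exact hpre.intermediate_value mem_connectedComponent hx hf.continuousOn ⟨hy0, hx0⟩
      · exact hpre.intermediate_value hx mem_connectedComponent hf.continuousOn ⟨hx0, hy0⟩
    obtain ⟨p, -, hp⟩ := h0
    exact p.2 α hα hp
  · intro h
    have hsub : {p | SameSide G x p} ⊆ regularPoints G := fun p hp α hα h0 => by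
      simpa [h0] using hp α hα
    have hpre : IsPreconnected (Subtype.val ⁻¹' {p | SameSide G x p} : Set (regularPoints G)) :=
      Topology.IsInducing.subtypeVal.isPreconnected_image.mp <| by
        rw [Subtype.image_preimage_coe, Set.inter_eq_right.mpr hsub]
        exact (convex_setOf_sameSide x.1).isPreconnected
    have hxx : SameSide G x x := fun α hα => mul_self_pos.mpr (x.2 α hα)
    exact (ConnectedComponents.coe_eq_coe'.mpr (hpre.subset_connectedComponent hxx h)).symm

/-- A root hyperplane separating `g • x` from `y` would let its reflection increase `⟪g • x, y⟫`,
so a maximiser of this quantity works. -/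
theorem exists_sameSide_smul {x y : Fin n → ℝ} (hx : x ∈ regularPoints G)
    (hy : y ∈ regularPoints G) : ∃ g : G, SameSide G (g • x) y := by
  obtain ⟨g, -, hmax⟩ := Finset.exists_max_image Finset.univ (fun g : G => ⟪g • x, y⟫)
    ⟨1, Finset.mem_univ _⟩
  refine ⟨g, fun α hα => lt_of_le_of_ne ?_
    (mul_ne_zero (smul_mem_regularPoints g hx α hα) (hy α hα)).symm⟩
  by_contra! hneg
  have := hmax (rootReflection G α * g) (Finset.mem_univ _)
  rw [mul_smul, rootReflection_smul hα, LinearMap.map_sub₂, LinearMap.map_smul₂,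
    smul_eq_mul] at this
  nlinarith

variable (G) in
def positiveRoots (x₀ : Fin n → ℝ) : Set (Fin n → ℝ) := {α | IsRoot G α ∧ 0 < ⟪α, x₀⟫}

theorem neg_mem_positiveRoots {x₀ : Fin n → ℝ} (hα : IsRoot G α) (hneg : ⟪α, x₀⟫ < 0) :
    -α ∈ positiveRoots G x₀ :=
  ⟨hα.neg, by simpa using hneg⟩

open Classical in
variable (G) in
structure IsSimpleSystem (x₀ : Fin n → ℝ) (Δ : Finset (Fin n → ℝ)) : Prop where
  subset_positiveRoots : ↑Δ ⊆ positiveRoots G x₀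
  positiveRoots_subset_hull : positiveRoots G x₀ ⊆ PointedCone.hull ℝ (Δ : Set (Fin n → ℝ))
  notMem_hull_erase : ∀ δ ∈ Δ, δ ∉ PointedCone.hull ℝ (Δ.erase δ : Set (Fin n → ℝ))

theorem exists_isSimpleSystem (x₀ : Fin n → ℝ) : ∃ Δ, IsSimpleSystem G x₀ Δ := by
  classical
  let P (Δ : Finset (Fin n → ℝ)) : Prop :=
    ↑Δ ⊆ positiveRoots G x₀ ∧ positiveRoots G x₀ ⊆ PointedCone.hull ℝ (Δ : Set (Fin n → ℝ))
  have hfin : (positiveRoots G x₀).Finite := finite_setOf_isRoot.subset fun α hα => hα.1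
  obtain ⟨Δ, hmin⟩ := exists_minimal_of_wellFoundedLT P
    ⟨hfin.toFinset, by simp, by simp⟩
  refine ⟨Δ, hmin.1.1, hmin.1.2, fun δ hδ hmem => hmin.not_prop_of_lt (Finset.erase_ssubset hδ)
    ⟨(Finset.coe_subset.mpr (Δ.erase_subset δ)).trans hmin.1.1, ?_⟩⟩
  have hspan := Submodule.span_insert_eq_span hmem
  rw [← Finset.coe_insert, Finset.insert_erase hδ] at hspan
  exact fun β hβ => hspan.le (hmin.1.2 hβ)

namespace IsSimpleSystem

variable {x₀ : Fin n → ℝ} {Δ : Finset (Fin n → ℝ)} {δ : Fin n → ℝ}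

/-- Both `β` and `-(s_δ • β)` lie in the cone of `Δ` and add up to a multiple of `δ`. Splitting
off their `δ`-components, either `δ` lies in the cone of `Δ \ {δ}` or `β` is a multiple of `δ`. -/
theorem rootReflection_smul_mem (hx₀ : x₀ ∈ regularPoints G) (hΔ : IsSimpleSystem G x₀ Δ)
    (hδ : δ ∈ Δ) (hβ : β ∈ positiveRoots G x₀) (hne : β ≠ δ) :
    rootReflection G δ • β ∈ positiveRoots G x₀ := by
  classical
  obtain ⟨hδr, hδx⟩ := hΔ.subset_positiveRoots hδ
  have hγ : IsRoot G (rootReflection G δ • β) := hβ.1.smul _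
  refine ⟨hγ, (hx₀ _ hγ).lt_or_gt.resolve_left fun hneg => ?_⟩
  obtain ⟨t₁, ht₁, w₁, hw₁, hβw⟩ :=
    PointedCone.exists_smul_add_of_mem_hull hδ (hΔ.positiveRoots_subset_hull hβ)
  obtain ⟨t₂, ht₂, w₂, hw₂, hγw⟩ := PointedCone.exists_smul_add_of_mem_hull hδ
    (hΔ.positiveRoots_subset_hull (neg_mem_positiveRoots hγ hneg))
  have hsum : w₁ + w₂ = (2 * ⟪δ, β⟫ - t₁ - t₂) • δ := by
    rw [rootReflection_smul hδr] at hγw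
    linear_combination (norm := module) -hβw - hγw
  have hpos : ∀ u ∈ (Δ.erase δ : Set (Fin n → ℝ)), 0 < (invariantForm G).flip x₀ u :=
    fun u hu => (hΔ.subset_positiveRoots (Finset.mem_of_mem_erase hu)).2
  rcases PointedCone.eq_zero_or_apply_pos_of_mem_hull hpos hw₁ with
    rfl | (hw₁pos : 0 < ⟪w₁, x₀⟫)
  · rcases eq_or_eq_neg_of_eq_smul hδr.1 hβ.1.1 (c := t₁) (by simpa using hβw) with h | h
    · exact hne h
    · have := hβ.2
      rw [h, map_neg, LinearMap.neg_apply] at this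
      linarith
  · have hw₂pos : 0 ≤ ⟪w₂, x₀⟫ :=
      PointedCone.apply_nonneg_of_mem_hull (f := (invariantForm G).flip x₀)
        (fun u hu => (hpos u hu).le) hw₂
    have he : 0 < 2 * ⟪δ, β⟫ - t₁ - t₂ := by
      have : ⟪w₁, x₀⟫ + ⟪w₂, x₀⟫ = (2 * ⟪δ, β⟫ - t₁ - t₂) * ⟪δ, x₀⟫ := by
        simp only [← LinearMap.map_add₂, hsum, LinearMap.map_smul₂, smul_eq_mul]
      exact pos_of_mul_pos_left (by linarith) hδx.le
    refine hΔ.notMem_hull_erase δ hδ ?_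
    convert PointedCone.smul_mem _ (inv_nonneg.mpr he.le) (add_mem hw₁ hw₂) using 1
    rw [hsum, smul_smul, inv_mul_cancel₀ he.ne', one_smul]

/-- A root of least height `⟪·, x₀⟫` among the positive roots in the orbit of `β` under the simple
reflections is simple, since otherwise some simple reflection would lower its height. -/
theorem rootReflection_mem_closure (hx₀ : x₀ ∈ regularPoints G) (hΔ : IsSimpleSystem G x₀ Δ)
    (hβ : β ∈ positiveRoots G x₀) :
    rootReflection G β ∈ Subgroup.closure (rootReflection G '' Δ) := by
  set W := Subgroup.closure (rootReflection G '' Δ)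
  have hfin : {γ ∈ positiveRoots G x₀ | ∃ w ∈ W, γ = w • β}.Finite :=
    finite_setOf_isRoot.subset fun γ hγ => hγ.1.1
  obtain ⟨_, ⟨hγ, w, hw, rfl⟩, hmin⟩ := Set.exists_min_image _ (⟪·, x₀⟫) hfin
    ⟨β, hβ, 1, one_mem W, (one_smul _ _).symm⟩
  have hγΔ : w • β ∈ Δ := by
    by_contra hnotΔ
    obtain ⟨δ, hδ, hpos⟩ : ∃ δ ∈ Δ, 0 < ⟪w • β, δ⟫ := by
      by_contra! hle
      have := PointedCone.apply_nonneg_of_mem_hull (f := -invariantForm G (w • β))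
        (fun u hu => by simpa using hle u hu) (hΔ.positiveRoots_subset_hull hγ)
      simpa using (this.trans_lt (by simpa using invariantForm_self_pos hγ.1.ne_zero)).false
    have hmem := hΔ.rootReflection_smul_mem hx₀ hδ hγ (ne_of_mem_of_not_mem hδ hnotΔ).symm
    have := hmin _ ⟨hmem, rootReflection G δ * w,
      mul_mem (Subgroup.subset_closure ⟨δ, hδ, rfl⟩) hw, (mul_smul _ _ _).symm⟩
    rw [rootReflection_smul (hΔ.subset_positiveRoots hδ).1, LinearMap.map_sub₂,
      LinearMap.map_smul₂, smul_eq_mul, invariantForm_comm δ] at this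
    nlinarith [(hΔ.subset_positiveRoots hδ).2]
  have hconj : rootReflection G β = w⁻¹ * rootReflection G (w • β) * w := by
    rw [rootReflection_smul_eq w hβ.1]
    group
  rw [hconj]
  exact mul_mem (mul_mem (inv_mem hw) (Subgroup.subset_closure ⟨_, hγΔ, rfl⟩)) hw

theorem closure_eq_top (hgen : G = Subgroup.closure {σ | σ ∈ G ∧ IsReflection σ})
    (hx₀ : x₀ ∈ regularPoints G) (hΔ : IsSimpleSystem G x₀ Δ) :
    Subgroup.closure (rootReflection G '' Δ) = ⊤ := by
  set W := Subgroup.closure (rootReflection G '' Δ)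
  have hroot : ∀ α, IsRoot G α → rootReflection G α ∈ W := fun α hα => by
    rcases (hx₀ α hα).lt_or_gt with hneg | hpos
    · rw [← rootReflection_neg hα]
      exact hΔ.rootReflection_mem_closure hx₀ (neg_mem_positiveRoots hα hneg)
    · exact hΔ.rootReflection_mem_closure hx₀ ⟨hα, hpos⟩
  have hle : G ≤ W.map G.subtype := hgen.le.trans <| (Subgroup.closure_le _).mpr
    fun σ ⟨hσ, hrefl⟩ => by
      obtain ⟨α, hα, hs⟩ := exists_isRoot_of_isReflection (s := ⟨σ, hσ⟩) hrefl
      exact ⟨_, hroot α hα, by simp [hs]⟩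
  refine eq_top_iff.mpr fun g _ => ?_
  obtain ⟨w, hw, hwg⟩ := hle g.2
  exact Subtype.ext hwg ▸ hw

/-- The exchange condition. -/
theorem exists_prod_eq_prod_mul (hx₀ : x₀ ∈ regularPoints G) (hΔ : IsSimpleSystem G x₀ Δ)
    (hδ : δ ∈ Δ) {L : List G} (hL : ∀ s ∈ L, s ∈ rootReflection G '' Δ)
    (hneg : ⟪L.prod • δ, x₀⟫ < 0) :
    ∃ L' : List G, (∀ s ∈ L', s ∈ rootReflection G '' Δ) ∧ L'.length + 1 = L.length ∧
      L'.prod = L.prod * rootReflection G δ := by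
  induction L with
  | nil =>
    rw [List.prod_nil, one_smul] at hneg
    exact ((hΔ.subset_positiveRoots hδ).2.trans hneg).false.elim
  | cons s L ih =>
    obtain ⟨a, ha, rfl⟩ := hL s List.mem_cons_self
    have hLΔ : ∀ s ∈ L, s ∈ rootReflection G '' Δ := fun s hs => hL s (List.mem_cons_of_mem _ hs)
    have hδr := (hΔ.subset_positiveRoots hδ).1
    rw [List.prod_cons, mul_smul] at hneg
    rcases (hx₀ _ (hδr.smul L.prod)).lt_or_gt with hneg' | hpos
    · obtain ⟨L', hL', hlen, hprod⟩ := ih hLΔ hneg'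
      exact ⟨rootReflection G a :: L', List.forall_mem_cons.mpr ⟨⟨a, ha, rfl⟩, hL'⟩,
        by simp [hlen], by rw [List.prod_cons, List.prod_cons, hprod, mul_assoc]⟩
    · have hγa : L.prod • δ = a := by
        by_contra hne
        exact (hΔ.rootReflection_smul_mem hx₀ ha ⟨hδr.smul _, hpos⟩ hne).2.asymm hneg
      refine ⟨L, hLΔ, rfl, ?_⟩
      rw [List.prod_cons, ← hγa, rootReflection_smul_eq _ hδr, inv_mul_cancel_right, mul_assoc,
        rootReflection_mul_self hδr, mul_one]

theorem eq_one_of_forall_smul_mem (hx₀ : x₀ ∈ regularPoints G) (hΔ : IsSimpleSystem G x₀ Δ)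
    {g : G} (hgW : g ∈ Subgroup.closure (rootReflection G '' Δ))
    (hg : ∀ β ∈ positiveRoots G x₀, g • β ∈ positiveRoots G x₀) : g = 1 := by
  have hmem : g ∈ Submonoid.closure (rootReflection G '' Δ) := by
    rwa [← Subgroup.closure_toSubmonoid_of_finite]
  obtain ⟨L, hL, rfl⟩ := Submonoid.exists_list_of_mem_closure hmem
  clear hmem hgW
  induction hlen : L.length using Nat.strong_induction_on generalizing L with
  | _ k ih =>
  rcases L.eq_nil_or_concat with rfl | ⟨L, s, rfl⟩
  · rfl
  obtain ⟨δ, hδ, rfl⟩ := hL s (by simp)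
  have hδr := (hΔ.subset_positiveRoots hδ).1
  have hLΔ : ∀ s ∈ L, s ∈ rootReflection G '' Δ := fun s hs => hL s (by simp [hs])
  have hneg : ⟪L.prod • δ, x₀⟫ < 0 := by
    have := (hg δ (hΔ.subset_positiveRoots hδ)).2
    rwa [List.concat_eq_append, List.prod_append, List.prod_singleton, mul_smul,
      rootReflection_smul_self hδr, smul_neg, map_neg, LinearMap.neg_apply, neg_pos] at this
  obtain ⟨L', hL', hlen', hprod⟩ := hΔ.exists_prod_eq_prod_mul hx₀ hδ hLΔ hneg
  rw [List.concat_eq_append, List.prod_append, List.prod_singleton, ← hprod] at hg ⊢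
  exact ih L'.length (by simp at hlen; omega) L' hL' hg rfl

end IsSimpleSystem

end ReflectionGroup

theorem card_connectedComponents_regularPoints {n : ℕ} (G : Subgroup (GL (Fin n) ℝ))
    [Fintype G] (hgen : G = Subgroup.closure {σ | σ ∈ G ∧ IsReflection σ}) :
    Nat.card (ConnectedComponents (regularPoints G)) = Nat.card G := by
  obtain ⟨x₀, hx₀⟩ := regularPoints_nonempty (G := G)
  obtain ⟨Δ, hΔ⟩ := exists_isSimpleSystem (G := G) x₀
  let orbitMap (g : G) : ConnectedComponents (regularPoints G) :=
    ConnectedComponents.mk ⟨g • x₀, smul_mem_regularPoints g hx₀⟩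
  refine (Nat.card_eq_of_bijective orbitMap ⟨fun g h hgh => ?_, fun c => ?_⟩).symm
  · have hside := connectedComponentsMk_eq_iff_sameSide.mp hgh
    refine inv_mul_eq_one.mp (hΔ.eq_one_of_forall_smul_mem hx₀
      (hΔ.closure_eq_top hgen hx₀ ▸ Subgroup.mem_top _) fun β hβ => ⟨hβ.1.smul _, ?_⟩)
    have hβh : 0 < invariantForm G (h • β) (h • x₀) := by
      rw [invariantForm_smul_smul]
      exact hβ.2
    rw [mul_smul, invariantForm_smul_left, inv_inv]
    exact (pos_iff_pos_of_mul_pos (hside _ (hβ.1.smul h))).mpr hβh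
  · obtain ⟨⟨y, hy⟩, rfl⟩ := ConnectedComponents.surjective_coe c
    obtain ⟨g, hg⟩ := exists_sameSide_smul hx₀ hy
    exact ⟨g, connectedComponentsMk_eq_iff_sameSide.mpr hg⟩

/-- For a finite Coxeter group `G` acting on `ℝ^n` (a finite subgroup of
`GL_n(ℝ)` generated by its reflections), the number of chambers of the reflection
arrangement — connected components of the complement of the union of the reflection
hyperplanes, i.e. of the fixed hyperplanes of the reflections of `G` — equals `|G|`. -/
theorem card_chambers_eq_card_coxeter_group
    (n : ℕ) (G : Subgroup (Matrix.GeneralLinearGroup (Fin n) ℝ))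
    (hfin : Finite G)
    (hgen : G = Subgroup.closure {σ | σ ∈ G ∧ IsReflection σ}) :
    Nat.card (ConnectedComponents
      ↥{x : Fin n → ℝ | ∀ σ ∈ G, IsReflection σ →
          (σ : Matrix (Fin n) (Fin n) ℝ).mulVec x ≠ x})
      = Nat.card G := by
  have : Fintype G := Fintype.ofFinite G
  rw [setOf_isReflection_eq_regularPoints]
  exact card_connectedComponents_regularPoints G hgen
end

section
/- Let f: ℂ^n → ℂ be homogeneous of degree 2N and q homogeneous of degree 2, and let h(x) = e^{2πi/(2N)} x. Fix j ≥ 1 and a finite group G acting linearly on ℂ^n commuting with h, with U a G- and scaling-stable open set. Then the variety {(x,z) ∈ (U/G) × ℂ^× : q(x) ≠ 0, f(x) = 1, h^j(x) = x mod G, z^{2N} = q(x)^N} is isomorphic to {(x,z) ∈ (U/G) × ℂ^× : q(x)^N = 1, f(x) ≠ 0, h^j(x) = x mod G, z^{2N} = f(x)} via (x,z) ↦ (x z^{-1}, z^{-1}), whose inverse is given by the same formula. -/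
/-- The `G`-orbit relation on pairs `(x, z) ∈ ℂ^n × ℂ` (with `G` acting on the first
factor); its quotient models subvarieties of `(U/G) × ℂ`. -/
def gOrbitRel (n : ℕ) (G : Subgroup (Matrix.GeneralLinearGroup (Fin n) ℂ)) :
    ((Fin n → ℂ) × ℂ) → ((Fin n → ℂ) × ℂ) → Prop :=
  fun p q => p.2 = q.2 ∧ ∃ σ ∈ G, (σ : Matrix (Fin n) (Fin n) ℂ).mulVec p.1 = q.1

/-- Let `f, q : ℂ^n → ℂ` be homogeneous of degrees `2N` and `2`,
invariant under a finite group `G ⊆ GL_n(ℂ)`, let `U` be a `G`- and scaling-stable open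
set, `h(x) = ζ • x` with `ζ = e^{2πi/(2N)}`, and `j ≥ 1`.  Then the variety
`{(x,z) ∈ (U/G) × ℂˣ : q(x) ≠ 0, f(x) = 1, h^j(x) = x mod G, z^{2N} = q(x)^N}`
is isomorphic to
`{(x,z) ∈ (U/G) × ℂˣ : q(x)^N = 1, f(x) ≠ 0, h^j(x) = x mod G, z^{2N} = f(x)}`
via `(x, z) ↦ (x z⁻¹, z⁻¹)`, whose inverse is given by the same formula. -/
theorem variety_isomorphism_xz
    (n N : ℕ) (hN : 1 ≤ N) (j : ℕ) (hj : 1 ≤ j)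
    (f q : (Fin n → ℂ) → ℂ)
    (hf : ∀ (c : ℂ) (x : Fin n → ℂ), f (c • x) = c ^ (2 * N) * f x)
    (hq : ∀ (c : ℂ) (x : Fin n → ℂ), q (c • x) = c ^ 2 * q x)
    (G : Subgroup (Matrix.GeneralLinearGroup (Fin n) ℂ)) (hGfin : Finite G)
    (hGf : ∀ σ ∈ G, ∀ x, f ((σ : Matrix (Fin n) (Fin n) ℂ).mulVec x) = f x)
    (hGq : ∀ σ ∈ G, ∀ x, q ((σ : Matrix (Fin n) (Fin n) ℂ).mulVec x) = q x)
    (U : Set (Fin n → ℂ)) (hUopen : IsOpen U)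
    (hGU : ∀ σ ∈ G, ∀ x ∈ U, (σ : Matrix (Fin n) (Fin n) ℂ).mulVec x ∈ U)
    (hscale : ∀ c : ℂ, c ≠ 0 → ∀ x ∈ U, c • x ∈ U)
    (ζ : ℂ) (hζ : ζ = Complex.exp (2 * Real.pi * Complex.I / (2 * N)))
    (P₁ P₂ : (Fin n → ℂ) × ℂ → Prop)
    (hP₁ : ∀ p, P₁ p ↔ (p.1 ∈ U ∧ p.2 ≠ 0 ∧ q p.1 ≠ 0 ∧ f p.1 = 1 ∧
      (∃ σ ∈ G, (σ : Matrix (Fin n) (Fin n) ℂ).mulVec (ζ ^ j • p.1) = p.1) ∧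
      p.2 ^ (2 * N) = q p.1 ^ N))
    (hP₂ : ∀ p, P₂ p ↔ (p.1 ∈ U ∧ p.2 ≠ 0 ∧ q p.1 ^ N = 1 ∧ f p.1 ≠ 0 ∧
      (∃ σ ∈ G, (σ : Matrix (Fin n) (Fin n) ℂ).mulVec (ζ ^ j • p.1) = p.1) ∧
      p.2 ^ (2 * N) = f p.1)) :
    ∃ e : ↥{c : Quot (gOrbitRel n G) | ∃ p, Quot.mk (gOrbitRel n G) p = c ∧ P₁ p}
        ≃ ↥{c : Quot (gOrbitRel n G) | ∃ p, Quot.mk (gOrbitRel n G) p = c ∧ P₂ p},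
      (∀ (p : (Fin n → ℂ) × ℂ) (hp : P₁ p),
        (e ⟨Quot.mk (gOrbitRel n G) p, ⟨p, rfl, hp⟩⟩).val
          = Quot.mk (gOrbitRel n G) (p.2⁻¹ • p.1, p.2⁻¹))
      ∧
      (∀ (p : (Fin n → ℂ) × ℂ) (hp : P₂ p),
        (e.symm ⟨Quot.mk (gOrbitRel n G) p, ⟨p, rfl, hp⟩⟩).val
          = Quot.mk (gOrbitRel n G) (p.2⁻¹ • p.1, p.2⁻¹)) := by

  classical
  set R := gOrbitRel n G with hR
  set φ : (Fin n → ℂ) × ℂ → (Fin n → ℂ) × ℂ := fun p => (p.2⁻¹ • p.1, p.2⁻¹) with hφdef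
  have hφR : ∀ a b, R a b → R (φ a) (φ b) := by
    rintro ⟨x, z⟩ ⟨y, w⟩ ⟨h2, σ, hσ, h1⟩
    have h2' : z = w := h2
    have h1' : (σ : Matrix (Fin n) (Fin n) ℂ).mulVec x = y := h1
    subst h2'
    refine ⟨rfl, σ, hσ, ?_⟩
    show (σ : Matrix (Fin n) (Fin n) ℂ).mulVec (z⁻¹ • x) = z⁻¹ • y
    rw [Matrix.mulVec_smul, h1']
  have hfix : ∀ (z : ℂ) (x : Fin n → ℂ),
      (∃ σ ∈ G, (σ : Matrix (Fin n) (Fin n) ℂ).mulVec (ζ ^ j • x) = x) →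
      (∃ σ ∈ G, (σ : Matrix (Fin n) (Fin n) ℂ).mulVec (ζ ^ j • (z⁻¹ • x)) = z⁻¹ • x) := by
    rintro z x ⟨σ, hσ, hx⟩
    refine ⟨σ, hσ, ?_⟩
    rw [smul_comm, Matrix.mulVec_smul, hx]
  have h12 : ∀ p, P₁ p → P₂ (φ p) := by
    rintro ⟨x, z⟩ hp
    rw [hP₁] at hp
    obtain ⟨hU, hz, hq0, hf1, hfx, hzq⟩ := hp
    rw [hP₂]
    refine ⟨hscale _ (inv_ne_zero hz) _ hU, inv_ne_zero hz, ?_, ?_, hfix z x hfx, ?_⟩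
    · simp only [φ, hq, mul_pow, ← pow_mul, inv_pow, hzq]
      field_simp
    · simp only [φ, hf, hf1, mul_one, inv_pow]
      exact inv_ne_zero (pow_ne_zero _ hz)
    · simp only [φ, hf, hf1, mul_one]
  have h21 : ∀ p, P₂ p → P₁ (φ p) := by
    rintro ⟨x, z⟩ hp
    rw [hP₂] at hp
    obtain ⟨hU, hz, hqN, hf0, hfx, hzf⟩ := hp
    rw [hP₁]
    have hq0 : q x ≠ 0 := by
      intro h; rw [h] at hqN; simp [zero_pow (by omega : N ≠ 0)] at hqN
    refine ⟨hscale _ (inv_ne_zero hz) _ hU, inv_ne_zero hz, ?_, ?_, hfix z x hfx, ?_⟩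
    · simp only [φ, hq]
      exact mul_ne_zero (pow_ne_zero _ (inv_ne_zero hz)) hq0
    · simp only [φ, hf, inv_pow, hzf]
      field_simp
    · simp only [φ, hq, mul_pow, ← pow_mul, inv_pow, hzf, hqN, mul_one]
  have hφφ : ∀ p : (Fin n → ℂ) × ℂ, p.2 ≠ 0 → φ (φ p) = p := by
    rintro ⟨x, z⟩ hz
    simp [φ, smul_smul, inv_inv, mul_inv_cancel₀ hz]
  set F : Quot R → Quot R := Quot.map φ hφR with hF
  have hFmk : ∀ p, F (Quot.mk R p) = Quot.mk R (φ p) := fun _ => rfl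
  set S₁ := {c : Quot (gOrbitRel n G) | ∃ p, Quot.mk (gOrbitRel n G) p = c ∧ P₁ p}
  set S₂ := {c : Quot (gOrbitRel n G) | ∃ p, Quot.mk (gOrbitRel n G) p = c ∧ P₂ p}
  have hto : ∀ c ∈ S₁, F c ∈ S₂ := by
    rintro c ⟨p, hp, hP⟩
    subst hp
    exact ⟨φ p, rfl, h12 p hP⟩
  have hinv : ∀ c ∈ S₂, F c ∈ S₁ := by
    rintro c ⟨p, hp, hP⟩
    subst hp
    exact ⟨φ p, rfl, h21 p hP⟩
  refine ⟨⟨fun c => ⟨F c.1, hto c.1 c.2⟩, fun c => ⟨F c.1, hinv c.1 c.2⟩, ?_, ?_⟩,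
    fun p hp => rfl, fun p hp => rfl⟩
  · rintro ⟨c, hc⟩
    obtain ⟨p, hp, hP⟩ := hc
    apply Subtype.ext
    show F (F c) = c
    rw [← hp, hFmk, hFmk, hφφ p ((hP₁ p).mp hP).2.1]
  · rintro ⟨c, hc⟩
    obtain ⟨p, hp, hP⟩ := hc
    apply Subtype.ext
    show F (F c) = c
    rw [← hp, hFmk, hFmk, hφφ p ((hP₂ p).mp hP).2.1]
end

section
/- Let G be a finite real reflection group on ℝ^n with invariant positive definite quadratic form q, degrees d_1,…,d_n, N reflection hyperplanes with chosen linear equations ℓ_1,…,ℓ_N, and Δ = (∏ ℓ_i)^2. Then the maximum of Δ on the sphere S = {x ∈ ℝ^n : q(x) = 1} equals κ · (∏_{i=1}^n d_i^{d_i}) / N^N, where κ = ∏_{i=1}^N q(ℓ_i)/4 and ℓ_i is identified with a vector in ℝ^n via q. -/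
open MeasureTheory

/-- The bilinear form attached to a real matrix `Mq`. -/
def bilinR {n : ℕ} (Mq : Matrix (Fin n) (Fin n) ℝ) (x y : Fin n → ℝ) : ℝ :=
  ∑ i, ∑ j, Mq i j * x i * y j

/-!
Laplace's method: `Δ` is homogeneous of degree `2N` and `q` of degree `2`, so after the
substitution `x = √(Nk) y` the integrand `Δ^k e^{-q}` concentrates near the maximisers of `Δ` on
`S`, and `(∫ Δ^k e^{-q})^{1/k} ~ (max_S Δ) (Nk/e)^N` as `k → ∞`. Macdonald's formula at `s = k`
together with Stirling's formula gives `(∫ Δ^k e^{-q})^{1/k} ~ κ ∏ dᵢ^{dᵢ} (k/e)^N`, because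
`∑ (dᵢ - 1) = N`. Comparing the two asymptotics yields the maximum.
-/

open Filter Topology Real
open scoped Nat Pointwise

theorem Real.pow_mul_exp_neg_mul_le {u b : ℝ} (hu : 0 ≤ u) (hb : 0 < b) (m : ℕ) :
    u ^ m * exp (-(b * u)) ≤ (m / (b * exp 1)) ^ m := by
  rcases Nat.eq_zero_or_pos m with rfl | hm
  · simpa using exp_le_one_iff.2 (by nlinarith : -(b * u) ≤ 0)
  have hm' : (0 : ℝ) < m := Nat.cast_pos.2 hm
  -- `x ≤ exp (x - 1)` at `x = b u / m`, raised to the `m`-th power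
  have key : (b * u / m) ^ m ≤ exp (b * u) * exp (-1) ^ m := by
    calc (b * u / m) ^ m ≤ exp (b * u / m - 1) ^ m :=
          pow_le_pow_left₀ (by positivity) (by linarith [add_one_le_exp (b * u / m - 1)]) m
      _ = exp (b * u) * exp (-1) ^ m := by
          rw [← exp_nat_mul, ← exp_nat_mul, ← exp_add]; congr 1; field_simp; ring
  have hexp : exp (-1) = (exp 1)⁻¹ := by rw [exp_neg]
  calc u ^ m * exp (-(b * u)) = (m / b) ^ m * ((b * u / m) ^ m * exp (-(b * u))) := by
        rw [← mul_assoc, ← mul_pow]; field_simp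
    _ ≤ (m / b) ^ m * (exp (b * u) * exp (-1) ^ m * exp (-(b * u))) := by gcongr
    _ = (m / (b * exp 1)) ^ m := by
        rw [mul_comm (exp (b * u)), mul_assoc, ← exp_add, add_neg_cancel, exp_zero, mul_one, hexp,
          ← mul_pow]
        field_simp

theorem tendsto_rpow_inv_natCast_of_tendsto {a : ℕ → ℝ} {L : ℝ} (hL : L ≠ 0)
    (ha : Tendsto a atTop (𝓝 L)) : Tendsto (fun k : ℕ => a k ^ (k : ℝ)⁻¹) atTop (𝓝 1) := by
  simpa using ha.rpow (tendsto_inv_atTop_zero.comp tendsto_natCast_atTop_atTop) (Or.inl hL)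

theorem rpow_inv_natCast_le_of_le_pow_mul {F a c : ℝ} {k : ℕ} (hk : k ≠ 0) (hF : 0 ≤ F)
    (ha : 0 ≤ a) (hc : 0 ≤ c) (h : F ≤ a ^ k * c) : F ^ (k : ℝ)⁻¹ ≤ a * c ^ (k : ℝ)⁻¹ := by
  calc F ^ (k : ℝ)⁻¹ ≤ (a ^ k * c) ^ (k : ℝ)⁻¹ := by gcongr
    _ = a * c ^ (k : ℝ)⁻¹ := by rw [mul_rpow (by positivity) hc, pow_rpow_inv_natCast ha hk]

theorem le_rpow_inv_natCast_of_mul_pow_le {F a c : ℝ} {k : ℕ} (hk : k ≠ 0)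
    (ha : 0 ≤ a) (hc : 0 ≤ c) (h : c * a ^ k ≤ F) : c ^ (k : ℝ)⁻¹ * a ≤ F ^ (k : ℝ)⁻¹ := by
  calc c ^ (k : ℝ)⁻¹ * a = (c * a ^ k) ^ (k : ℝ)⁻¹ := by
        rw [mul_rpow hc (by positivity), pow_rpow_inv_natCast ha hk]
    _ ≤ F ^ (k : ℝ)⁻¹ := by gcongr

theorem factorial_eq_stirlingSeq_mul {m : ℕ} (hm : m ≠ 0) :
    (m ! : ℝ) = Stirling.stirlingSeq m * (√(2 * m) * (m / exp 1) ^ m) := by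
  rw [Stirling.stirlingSeq, div_mul_cancel₀ _ (by positivity)]

theorem factorial_mul_div_factorial_eq {d k : ℕ} (hd : d ≠ 0) (hk : k ≠ 0) :
    ((d * k)! / k ! : ℝ) = Stirling.stirlingSeq (d * k) * √d / Stirling.stirlingSeq k
      * ((d : ℝ) ^ d * (k / exp 1) ^ (d - 1)) ^ k := by
  have hs : Stirling.stirlingSeq k ≠ 0 :=
    ((sqrt_pos.2 pi_pos).trans_le (Stirling.sqrt_pi_le_stirlingSeq hk)).ne'
  obtain ⟨d, rfl⟩ := Nat.exists_eq_add_of_le' (Nat.one_le_iff_ne_zero.2 hd)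
  rw [factorial_eq_stirlingSeq_mul (mul_ne_zero hd hk), factorial_eq_stirlingSeq_mul hk]
  have hsqrt : √(2 * ((d + 1) * k : ℕ)) = √(d + 1 : ℕ) * √(2 * k) := by
    rw [← sqrt_mul (by positivity)]; push_cast; ring_nf
  have hpow : (((d + 1 : ℕ) : ℝ) * k / exp 1) ^ ((d + 1) * k)
      = ((d + 1 : ℕ) : ℝ) ^ ((d + 1) * k) * ((k / exp 1) ^ k * (k / exp 1) ^ (d * k)) := by
    rw [mul_div_assoc, mul_pow, ← pow_add]; ring
  rw [hsqrt, Nat.cast_mul, hpow, Nat.add_sub_cancel, mul_pow, ← pow_mul, ← pow_mul,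
    mul_comm (d + 1) k, mul_comm d k]
  field_simp

theorem tendsto_factorial_mul_div_factorial_rpow_inv {d : ℕ} (hd : d ≠ 0) :
    Tendsto (fun k : ℕ => ((d * k)! / k ! : ℝ) ^ (k : ℝ)⁻¹ * (exp 1 / k) ^ (d - 1)) atTop
      (𝓝 ((d : ℝ) ^ d)) := by
  have hQ : Tendsto (fun k => Stirling.stirlingSeq (d * k) * √d / Stirling.stirlingSeq k) atTop
      (𝓝 (√π * √d / √π)) :=
    ((Stirling.tendsto_stirlingSeq_sqrt_pi.comp
      (tendsto_id.const_mul_atTop' (Nat.pos_of_ne_zero hd))).mul_const _).div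
      Stirling.tendsto_stirlingSeq_sqrt_pi (by positivity)
  have hroot := tendsto_rpow_inv_natCast_of_tendsto (by positivity) hQ
  refine (hroot.mul_const ((d : ℝ) ^ d)).congr' ?_ |>.trans (by rw [one_mul])
  filter_upwards [eventually_ne_atTop 0] with k hk
  have hQ0 : 0 ≤ Stirling.stirlingSeq (d * k) * √d / Stirling.stirlingSeq k := by
    unfold Stirling.stirlingSeq; positivity
  have hcancel : ((k : ℝ) / exp 1) ^ (d - 1) * (exp 1 / k) ^ (d - 1) = 1 := by
    rw [← mul_pow, div_mul_div_cancel₀ (exp_pos 1).ne', div_self (by positivity), one_pow]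
  rw [factorial_mul_div_factorial_eq hd hk, mul_rpow hQ0 (by positivity),
    pow_rpow_inv_natCast (by positivity) hk, mul_assoc, mul_assoc, hcancel, mul_one]

theorem tendsto_prod_factorial_mul_div_factorial_rpow_inv {ι : Type*} [Fintype ι] {d : ι → ℕ}
    (hd : ∀ i, d i ≠ 0) :
    Tendsto (fun k : ℕ => (∏ i, ((d i * k)! / k ! : ℝ)) ^ (k : ℝ)⁻¹ *
      (exp 1 / k) ^ (∑ i, (d i - 1))) atTop (𝓝 (∏ i, (d i : ℝ) ^ d i)) := by
  convert tendsto_finsetProd _ fun i _ => tendsto_factorial_mul_div_factorial_rpow_inv (hd i)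
    using 2 with k
  rw [← Real.finsetProd_rpow _ _ (fun i _ => by positivity), ← Finset.prod_pow_eq_pow_sum,
    ← Finset.prod_mul_distrib]

theorem tendsto_const_mul_pow_mul_rpow_inv {A κ L : ℝ} {P : ℕ → ℝ} {N : ℕ} (hA : 0 < A)
    (hκ : 0 ≤ κ) (hP : ∀ k, 0 ≤ P k)
    (h : Tendsto (fun k : ℕ => P k ^ (k : ℝ)⁻¹ * (exp 1 / k) ^ N) atTop (𝓝 L)) :
    Tendsto (fun k : ℕ => (A * κ ^ k * P k) ^ (k : ℝ)⁻¹ * (exp 1 / (N * k)) ^ N) atTop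
      (𝓝 (κ * L / N ^ N)) := by
  have hA' := tendsto_rpow_inv_natCast_of_tendsto hA.ne' (tendsto_const_nhds (x := A))
  refine (((hA'.mul_const κ).mul h).div_const ((N : ℝ) ^ N)).congr' ?_ |>.trans (by rw [one_mul])
  filter_upwards [eventually_ne_atTop 0] with k hk
  rw [mul_rpow (by positivity) (hP k), mul_rpow hA.le (by positivity), pow_rpow_inv_natCast hκ hk,
    mul_comm (N : ℝ), ← div_div, div_pow (_ / _)]
  ring

section Homogeneous

variable {E : Type*} [NormedAddCommGroup E] [NormedSpace ℝ E] {f q : E → ℝ} {N : ℕ}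

theorem apply_inv_sqrt_smul_self_eq_one (hq : ∀ (c : ℝ) x, q (c • x) = c ^ 2 * q x) {x : E}
    (hx : 0 < q x) : q ((√(q x))⁻¹ • x) = 1 := by
  rw [hq, inv_pow, sq_sqrt hx.le, inv_mul_cancel₀ hx.ne']

theorem nonempty_setOf_eq_one [Nontrivial E] (hq : ∀ (c : ℝ) x, q (c • x) = c ^ 2 * q x)
    (hpos : ∀ x, x ≠ 0 → 0 < q x) : {x | q x = 1}.Nonempty :=
  let ⟨y, hy⟩ := exists_ne (0 : E)
  ⟨_, apply_inv_sqrt_smul_self_eq_one hq (hpos y hy)⟩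

theorem isCompact_setOf_eq_one [FiniteDimensional ℝ E] (hqc : Continuous q)
    (hq : ∀ (c : ℝ) x, q (c • x) = c ^ 2 * q x) (hpos : ∀ x, x ≠ 0 → 0 < q x) :
    IsCompact {x | q x = 1} := by
  -- `{q = 1}` is the image of the unit sphere under `x ↦ q(x)^(-1/2) • x`
  refine ((isCompact_sphere (0 : E) 1).image_of_continuousOn (f := fun x => (√(q x))⁻¹ • x)
    fun x hx => ?_).of_isClosed_subset (isClosed_eq hqc continuous_const) fun y (hy : q y = 1) => ?_
  · have hx0 : x ≠ 0 := by rintro rfl; simp at hx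
    exact ((hqc.continuousAt.sqrt.inv₀ (sqrt_pos.2 (hpos x hx0)).ne').smul
      continuousAt_id).continuousWithinAt
  · have hy0 : y ≠ 0 := by rintro rfl; simpa [hy] using hq 0 0
    have hny : 0 < ‖y‖ := norm_pos_iff.2 hy0
    refine ⟨‖y‖⁻¹ • y, by simp [norm_smul, hny.ne'], ?_⟩
    dsimp only
    rw [hq, hy, mul_one, inv_pow, sqrt_inv, sqrt_sq hny.le, inv_inv, smul_inv_smul₀ hny.ne']

theorem le_mul_pow_of_isMaxOn (hq : ∀ (c : ℝ) x, q (c • x) = c ^ 2 * q x)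
    (hf : ∀ (c : ℝ) x, f (c • x) = (c ^ 2) ^ N * f x) (hpos : ∀ x, x ≠ 0 → 0 < q x) {x₀ : E}
    (hmax : IsMaxOn f {x | q x = 1} x₀) (x : E) : f x ≤ f x₀ * q x ^ N := by
  rcases eq_or_ne x 0 with rfl | hx
  · have hf0 := hf 0 x₀
    have hq0 := hq 0 x₀
    rw [zero_smul] at hf0 hq0
    exact le_of_eq (by rw [hf0, hq0]; ring)
  have hqx := hpos x hx
  have h := hmax (apply_inv_sqrt_smul_self_eq_one hq hqx)
  rw [Set.mem_ofPred_eq, hf, inv_pow, sq_sqrt hqx.le, inv_pow, inv_mul_le_iff₀ (by positivity)] at h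
  rwa [mul_comm]

end Homogeneous

theorem integral_pow_mul_exp_neg_le {α : Type*} [MeasurableSpace α] {μ : Measure α}
    {f q : α → ℝ} {N : ℕ} (hf0 : ∀ x, 0 ≤ f x) (hq0 : ∀ x, 0 ≤ q x) {M : ℝ}
    (hM : 0 ≤ M) (hfM : ∀ x, f x ≤ M * q x ^ N) {δ : ℝ} (hδ1 : δ < 1) (k : ℕ)
    (hint : Integrable (fun x => f x ^ k * exp (-q x)) μ)
    (hintδ : Integrable (fun x => exp (-(δ * q x))) μ) :
    ∫ x, f x ^ k * exp (-q x) ∂μ ≤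
      (M * (N * k / ((1 - δ) * exp 1)) ^ N) ^ k * ∫ x, exp (-(δ * q x)) ∂μ := by
  rw [← integral_const_mul]
  refine integral_mono hint (hintδ.const_mul _) fun x => ?_
  have hgauss := pow_mul_exp_neg_mul_le (hq0 x) (sub_pos.2 hδ1) (N * k)
  push_cast at hgauss
  have hsplit : exp (-q x) = exp (-((1 - δ) * q x)) * exp (-(δ * q x)) := by
    rw [← exp_add]; ring_nf
  calc f x ^ k * exp (-q x) ≤ (M * q x ^ N) ^ k * exp (-q x) := by
        gcongr; exact hf0 x; exact hfM x
    _ = M ^ k * (q x ^ (N * k) * exp (-((1 - δ) * q x))) * exp (-(δ * q x)) := by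
        rw [hsplit, mul_pow, ← pow_mul]; ring
    _ ≤ M ^ k * (N * k / ((1 - δ) * exp 1)) ^ (N * k) * exp (-(δ * q x)) := by gcongr
    _ = (M * (N * k / ((1 - δ) * exp 1)) ^ N) ^ k * exp (-(δ * q x)) := by
        rw [mul_pow, ← pow_mul]

section Laplace

variable {E : Type*} [NormedAddCommGroup E] [NormedSpace ℝ E] [FiniteDimensional ℝ E]
  [MeasurableSpace E] [BorelSpace E] {μ : Measure E} [μ.IsAddHaarMeasure] {f q : E → ℝ} {N : ℕ}

theorem measureReal_ball_mul_le_integral_pow_mul_exp_neg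
    (hq : ∀ (c : ℝ) x, q (c • x) = c ^ 2 * q x)
    (hf : ∀ (c : ℝ) x, f (c • x) = (c ^ 2) ^ N * f x) (hf0 : ∀ x, 0 ≤ f x) {x₀ : E} {ρ m b : ℝ}
    (hρ : 0 ≤ ρ) (hm : 0 ≤ m) (hball : ∀ x ∈ Metric.ball x₀ ρ, m < f x ∧ q x < b) {r : ℝ}
    (hr : 1 ≤ r) (k : ℕ) (hint : Integrable (fun x => f x ^ k * exp (-q x)) μ) :
    μ.real (Metric.ball 0 ρ) * (((r ^ 2) ^ N * m) ^ k * exp (-(r ^ 2 * b))) ≤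
      ∫ x, f x ^ k * exp (-q x) ∂μ := by
  have hsub : Metric.ball (r • x₀) ρ ⊆ r • Metric.ball x₀ ρ := by
    rw [smul_ball (by positivity), Real.norm_eq_abs, abs_of_pos (by positivity)]
    exact Metric.ball_subset_ball (le_mul_of_one_le_left hρ hr)
  have hlow : ∀ y ∈ Metric.ball (r • x₀) ρ,
      ((r ^ 2) ^ N * m) ^ k * exp (-(r ^ 2 * b)) ≤ f y ^ k * exp (-q y) := by
    intro y hy
    obtain ⟨x, hx, rfl⟩ := hsub hy
    obtain ⟨hfx, hqx⟩ := hball x hx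
    have := hf0 x
    rw [hf, hq]
    gcongr
  calc μ.real (Metric.ball 0 ρ) * (((r ^ 2) ^ N * m) ^ k * exp (-(r ^ 2 * b)))
      = (((r ^ 2) ^ N * m) ^ k * exp (-(r ^ 2 * b))) * μ.real (Metric.ball (r • x₀) ρ) := by
        rw [Measure.addHaar_real_ball_center μ (r • x₀), mul_comm]
    _ ≤ ∫ x in Metric.ball (r • x₀) ρ, f x ^ k * exp (-q x) ∂μ :=
        setIntegral_ge_of_const_le_real measurableSet_ball measure_ball_lt_top.ne hlow
          hint.integrableOn
    _ ≤ ∫ x, f x ^ k * exp (-q x) ∂μ :=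
        setIntegral_le_integral hint (ae_of_all _ fun x => by have := hf0 x; positivity)

theorem eventually_lt_integral_pow_mul_exp_neg_rpow_inv (hfc : Continuous f) (hqc : Continuous q)
    (hq : ∀ (c : ℝ) x, q (c • x) = c ^ 2 * q x) (hf : ∀ (c : ℝ) x, f (c • x) = (c ^ 2) ^ N * f x)
    (hf0 : ∀ x, 0 ≤ f x) (hN : N ≠ 0) {x₀ : E} (hx₀ : q x₀ = 1)
    (hint : ∀ k : ℕ, Integrable (fun x => f x ^ k * exp (-q x)) μ) {a : ℝ} (ha : a < f x₀) :
    ∀ᶠ k : ℕ in atTop,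
      a < (∫ x, f x ^ k * exp (-q x) ∂μ) ^ (k : ℝ)⁻¹ * (exp 1 / (N * k)) ^ N := by
  rcases lt_or_ge a 0 with ha0 | ha0
  · refine Eventually.of_forall fun k => ha0.trans_le ?_
    have : 0 ≤ ∫ x, f x ^ k * exp (-q x) ∂μ := integral_nonneg fun x => by
      have := hf0 x; positivity
    positivity
  obtain ⟨ε, ⟨haε, hεf⟩, hε⟩ : ∃ ε, (a < (f x₀ - ε) * exp (-(N * ε)) ∧ ε < f x₀) ∧ 0 < ε := by
    have hcont : ContinuousAt (fun ε : ℝ => (f x₀ - ε) * exp (-(N * ε))) 0 := by fun_prop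
    refine ((((hcont.eventually (lt_mem_nhds ?_)).and (gt_mem_nhds (ha0.trans_lt ha))).filter_mono
      nhdsWithin_le_nhds).and self_mem_nhdsWithin).exists (f := 𝓝[>] 0)
    simpa using ha
  obtain ⟨ρ, hρ, hball⟩ := Metric.isOpen_iff.1
    ((isOpen_lt continuous_const hfc).inter (isOpen_lt hqc continuous_const)) x₀
    (show f x₀ - ε < f x₀ ∧ q x₀ < 1 + ε by constructor <;> linarith)
  set c := μ.real (Metric.ball 0 ρ)
  have hc : 0 < c :=
    ENNReal.toReal_pos (Metric.measure_ball_pos μ 0 hρ).ne' measure_ball_lt_top.ne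
  set L := (f x₀ - ε) * exp (-(N * ε))
  have hlim : Tendsto (fun k : ℕ => c ^ (k : ℝ)⁻¹ * L) atTop (𝓝 L) := by
    simpa using (tendsto_rpow_inv_natCast_of_tendsto hc.ne' tendsto_const_nhds).mul_const L
  filter_upwards [hlim.eventually (lt_mem_nhds haε), eventually_ne_atTop 0] with k hk hk0
  refine hk.trans_le ?_
  have hNk : (0 : ℝ) < N * k := by positivity
  have hr : 1 ≤ √(N * k : ℝ) :=
    one_le_sqrt.2 (by exact_mod_cast Nat.one_le_iff_ne_zero.2 (mul_ne_zero hN hk0))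
  have hlow := measureReal_ball_mul_le_integral_pow_mul_exp_neg hq hf hf0 hρ.le
    (sub_nonneg.2 hεf.le) (fun x hx => hball hx) hr k (hint k) (μ := μ)
  rw [sq_sqrt hNk.le] at hlow
  set A := (N * k : ℝ) ^ N * (f x₀ - ε) * exp (-(N * (1 + ε)))
  have hA : 0 ≤ A := by have := sub_nonneg.2 hεf.le; positivity
  have hcA : c * A ^ k ≤ ∫ x, f x ^ k * exp (-q x) ∂μ := by
    convert hlow using 2
    rw [mul_pow, ← exp_nat_mul]; ring_nf
  have hexp : (N * k : ℝ) ^ N * (exp 1 / (N * k)) ^ N * exp (-(N * (1 + ε))) = exp (-(N * ε)) := by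
    rw [← mul_pow, mul_div_cancel₀ _ hNk.ne', ← exp_nat_mul, ← exp_add]; ring_nf
  calc c ^ (k : ℝ)⁻¹ * L = c ^ (k : ℝ)⁻¹ * A * (exp 1 / (N * k)) ^ N := by
        simp only [L, A]; rw [← hexp]; ring
    _ ≤ _ := by gcongr; exact le_rpow_inv_natCast_of_mul_pow_le hk0 hA hc.le hcA

theorem eventually_integral_pow_mul_exp_neg_rpow_inv_lt
    (hq : ∀ (c : ℝ) x, q (c • x) = c ^ 2 * q x) (hf0 : ∀ x, 0 ≤ f x) (hq0 : ∀ x, 0 ≤ q x)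
    (hN : N ≠ 0) {M : ℝ} (hM : 0 ≤ M) (hfM : ∀ x, f x ≤ M * q x ^ N)
    (hint : ∀ k : ℕ, Integrable (fun x => f x ^ k * exp (-q x)) μ) {b : ℝ} (hb : M < b) :
    ∀ᶠ k : ℕ in atTop,
      (∫ x, f x ^ k * exp (-q x) ∂μ) ^ (k : ℝ)⁻¹ * (exp 1 / (N * k)) ^ N < b := by
  obtain ⟨δ, ⟨hbδ, hδ1⟩, hδ⟩ : ∃ δ, (M / (1 - δ) ^ N < b ∧ δ < 1) ∧ 0 < δ := by
    have hcont : ContinuousAt (fun δ : ℝ => M / (1 - δ) ^ N) 0 :=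
      continuousAt_const.div (by fun_prop) (by norm_num)
    refine ((((hcont.eventually (gt_mem_nhds ?_)).and (gt_mem_nhds one_pos)).filter_mono
      nhdsWithin_le_nhds).and self_mem_nhdsWithin).exists (f := 𝓝[>] 0)
    simpa using hb
  have hintδ : Integrable (fun x => exp (-(δ * q x))) μ := by
    simpa [hq, sq_sqrt hδ.le] using (hint 0).comp_smul (sqrt_ne_zero'.2 hδ)
  set C := ∫ x, exp (-(δ * q x)) ∂μ
  have hC : 0 < C := integral_exp_pos hintδ
  set U := M / (1 - δ) ^ N
  have hlim : Tendsto (fun k : ℕ => U * C ^ (k : ℝ)⁻¹) atTop (𝓝 U) := by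
    simpa using (tendsto_rpow_inv_natCast_of_tendsto hC.ne' tendsto_const_nhds).const_mul U
  filter_upwards [hlim.eventually (gt_mem_nhds hbδ), eventually_ne_atTop 0] with k hk hk0
  refine lt_of_le_of_lt ?_ hk
  have hNk : (0 : ℝ) < N * k := by positivity
  have hroot := rpow_inv_natCast_le_of_le_pow_mul hk0
    (integral_nonneg fun x => by have := hf0 x; positivity) (by positivity) hC.le
    (integral_pow_mul_exp_neg_le hf0 hq0 hM hfM hδ1 k (hint k) hintδ)
  have hcancel : (N * k / ((1 - δ) * exp 1)) ^ N * (exp 1 / (N * k)) ^ N = ((1 - δ) ^ N)⁻¹ := by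
    rw [← mul_pow, ← inv_pow]
    congr 1
    field_simp [(sub_pos.2 hδ1).ne']
  calc (∫ x, f x ^ k * exp (-q x) ∂μ) ^ (k : ℝ)⁻¹ * (exp 1 / (N * k)) ^ N
      ≤ M * (N * k / ((1 - δ) * exp 1)) ^ N * C ^ (k : ℝ)⁻¹ * (exp 1 / (N * k)) ^ N := by
        gcongr
    _ = U * C ^ (k : ℝ)⁻¹ := by
        rw [mul_right_comm, mul_assoc M, hcancel, ← div_eq_mul_inv]

theorem tendsto_integral_pow_mul_exp_neg_rpow_inv (hfc : Continuous f) (hqc : Continuous q)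
    (hq : ∀ (c : ℝ) x, q (c • x) = c ^ 2 * q x) (hf : ∀ (c : ℝ) x, f (c • x) = (c ^ 2) ^ N * f x)
    (hf0 : ∀ x, 0 ≤ f x) (hpos : ∀ x, x ≠ 0 → 0 < q x) (hN : N ≠ 0) {x₀ : E} (hx₀ : q x₀ = 1)
    (hmax : IsMaxOn f {x | q x = 1} x₀)
    (hint : ∀ k : ℕ, Integrable (fun x => f x ^ k * exp (-q x)) μ) :
    Tendsto (fun k : ℕ => (∫ x, f x ^ k * exp (-q x) ∂μ) ^ (k : ℝ)⁻¹ * (exp 1 / (N * k)) ^ N)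
      atTop (𝓝 (f x₀)) := by
  have hq0 (x : E) : 0 ≤ q x := by
    rcases eq_or_ne x 0 with rfl | hx
    · exact (by simpa using hq 0 0 : q 0 = 0).ge
    · exact (hpos x hx).le
  exact tendsto_order.2 ⟨fun a ha => eventually_lt_integral_pow_mul_exp_neg_rpow_inv hfc hqc hq hf
    hf0 hN hx₀ hint ha, fun b hb => eventually_integral_pow_mul_exp_neg_rpow_inv_lt hq hf0 hq0 hN
    (hf0 x₀) (le_mul_pow_of_isMaxOn hq hf hpos hmax) hint hb⟩

end Laplace

section bilinR

variable {n : ℕ} (Mq : Matrix (Fin n) (Fin n) ℝ)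

theorem bilinR_smul_left (c : ℝ) (x y : Fin n → ℝ) : bilinR Mq (c • x) y = c * bilinR Mq x y := by
  simp [bilinR, Finset.mul_sum, mul_assoc, mul_left_comm]

theorem bilinR_smul_right (c : ℝ) (x y : Fin n → ℝ) :
    bilinR Mq x (c • y) = c * bilinR Mq x y := by
  simp [bilinR, Finset.mul_sum, mul_left_comm]

theorem bilinR_smul_smul (c : ℝ) (x : Fin n → ℝ) :
    bilinR Mq (c • x) (c • x) = c ^ 2 * bilinR Mq x x := by
  rw [bilinR_smul_left, bilinR_smul_right]; ring

theorem sq_prod_bilinR_smul {N : ℕ} (v : Fin N → Fin n → ℝ) (c : ℝ) (x : Fin n → ℝ) :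
    (∏ i, bilinR Mq (v i) (c • x)) ^ 2 = (c ^ 2) ^ N * (∏ i, bilinR Mq (v i) x) ^ 2 := by
  simp only [bilinR_smul_right, Finset.prod_mul_distrib, Finset.prod_const, Finset.card_univ,
    Fintype.card_fin]
  ring

theorem Continuous.bilinR {α : Type*} [TopologicalSpace α] {g h : α → Fin n → ℝ}
    (hg : Continuous g) (hh : Continuous h) : Continuous fun a => bilinR Mq (g a) (h a) := by
  unfold _root_.bilinR; fun_prop

theorem continuous_sq_prod_bilinR {N : ℕ} (v : Fin N → Fin n → ℝ) :
    Continuous fun x => (∏ i, bilinR Mq (v i) x) ^ 2 :=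
  (continuous_finsetProd _ fun _ _ => continuous_const.bilinR Mq continuous_id).pow 2

variable {Mq}

theorem Matrix.PosDef.bilinR_self_pos (hpos : Mq.PosDef) {x : Fin n → ℝ} (hx : x ≠ 0) :
    0 < bilinR Mq x x := by
  simpa [bilinR, dotProduct, Matrix.mulVec, Finset.mul_sum, mul_comm, mul_left_comm]
    using hpos.dotProduct_mulVec_pos hx

end bilinR

theorem max_discriminant_on_sphere_general
    (n N : ℕ) (hn : 1 ≤ n) (hN : 1 ≤ N)
    (Mq : Matrix (Fin n) (Fin n) ℝ) (hpos : Mq.PosDef)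
    (v : Fin N → (Fin n → ℝ)) (hv : ∀ i, v i ≠ 0)
    (d : Fin n → ℕ) (hd : ∀ i, 1 ≤ d i)
    (hsum : (∑ i, ((d i : ℤ) - 1)) = N)
    (Δ : (Fin n → ℝ) → ℝ) (hΔ : ∀ x, Δ x = (∏ i, bilinR Mq (v i) x) ^ 2)
    (κ : ℝ) (hκ : κ = ∏ i, bilinR Mq (v i) (v i) / 4)
    (hMac : ∀ s : ℝ, 0 ≤ s →
      (∫ x : Fin n → ℝ, Δ x ^ s * Real.exp (-(bilinR Mq x x)))
        = Real.pi ^ ((n : ℝ) / 2) * κ ^ s *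
            (∏ i, Real.Gamma (d i * s + 1) / Real.Gamma (s + 1)) *
            Mq.det ^ (-(1 : ℝ) / 2)) :
    IsGreatest {y : ℝ | ∃ x : Fin n → ℝ, bilinR Mq x x = 1 ∧ y = Δ x}
      (κ * (∏ i, (d i : ℝ) ^ (d i : ℕ)) / (N : ℝ) ^ (N : ℕ)) := by
  obtain rfl : Δ = fun x => (∏ i, bilinR Mq (v i) x) ^ 2 := funext hΔ
  have hq := bilinR_smul_smul Mq
  have hqc : Continuous fun x => bilinR Mq x x := continuous_id.bilinR Mq continuous_id
  have hqpos (x : Fin n → ℝ) (hx : x ≠ 0) : 0 < bilinR Mq x x := hpos.bilinR_self_pos hx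
  have : Nonempty (Fin n) := ⟨⟨0, hn⟩⟩
  obtain ⟨x₀, hx₀, hmax⟩ := (isCompact_setOf_eq_one hqc hq hqpos).exists_isMaxOn
    (nonempty_setOf_eq_one hq hqpos) (continuous_sq_prod_bilinR Mq v).continuousOn
  have hκ0 : 0 < κ := hκ ▸ Finset.prod_pos fun i _ => by have := hqpos _ (hv i); positivity
  have hA : 0 < π ^ ((n : ℝ) / 2) * Mq.det ^ (-(1 : ℝ) / 2) := by have := hpos.det_pos; positivity
  have hmac (k : ℕ) : ∫ x, ((∏ i, bilinR Mq (v i) x) ^ 2) ^ k * exp (-bilinR Mq x x) =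
      π ^ ((n : ℝ) / 2) * Mq.det ^ (-(1 : ℝ) / 2) * κ ^ k * ∏ i, ((d i * k)! / k ! : ℝ) := by
    have h := hMac k k.cast_nonneg
    simp only [rpow_natCast, ← Nat.cast_mul, Gamma_nat_eq_factorial] at h
    rw [h]
    ring
  have hint (k : ℕ) :
      Integrable fun x => ((∏ i, bilinR Mq (v i) x) ^ 2) ^ k * exp (-bilinR Mq x x) :=
    .of_integral_ne_zero (hmac k ▸ (mul_pos (mul_pos hA (pow_pos hκ0 k))
      (Finset.prod_pos fun i _ => by positivity)).ne')
  have hdeg : ∑ i, (d i - 1) = N := by zify [hd]; exact hsum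
  have hlim := tendsto_const_mul_pow_mul_rpow_inv hA hκ0.le (fun k => by positivity)
    (hdeg ▸ tendsto_prod_factorial_mul_div_factorial_rpow_inv fun i =>
      Nat.one_le_iff_ne_zero.1 (hd i))
  simp only [← hmac] at hlim
  have hx₀T := tendsto_nhds_unique (tendsto_integral_pow_mul_exp_neg_rpow_inv (μ := volume)
    (continuous_sq_prod_bilinR Mq v) hqc hq (sq_prod_bilinR_smul Mq v) (fun x => sq_nonneg _)
    hqpos (by omega) hx₀ hmax hint) hlim
  exact ⟨⟨x₀, hx₀, hx₀T.symm⟩, fun y ⟨x, hx, hy⟩ => hy ▸ hx₀T ▸ hmax hx⟩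

/-- Let `G` be a finite real reflection group on `ℝ^n` with invariant
positive definite form `q` (matrix `Mq`), degrees `d₁,…,dₙ`, and `N` reflection
hyperplanes with equations `ℓᵢ = q(vᵢ, ·)` (the linear form `ℓᵢ` being identified with
the vector `vᵢ` via `q`), and `Δ = (∏ᵢ ℓᵢ)²`.  Assuming Macdonald's formula
`∫ Δ^s e^{−q} dx = π^{n/2} κ^s (∏ᵢ Γ(dᵢs+1)/Γ(s+1)) (det Mq)^{−1/2}` with
`κ = ∏ᵢ q(vᵢ)/4`, the maximum of `Δ` on the sphere `S = {q = 1}` is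
`κ · (∏ᵢ dᵢ^{dᵢ}) / N^N`. -/
theorem max_discriminant_on_sphere
    (n N : ℕ) (hn : 1 ≤ n) (hN : 1 ≤ N)
    (G : Subgroup (Matrix.GeneralLinearGroup (Fin n) ℝ)) (hfin : Finite G)
    (hgen : G = Subgroup.closure {σ | σ ∈ G ∧ IsReflection σ})
    (Mq : Matrix (Fin n) (Fin n) ℝ) (hpos : Mq.PosDef) (hsym : Mq.IsSymm)
    (hGinv : ∀ σ ∈ G, ∀ x y, bilinR Mq ((σ : Matrix (Fin n) (Fin n) ℝ).mulVec x)
      ((σ : Matrix (Fin n) (Fin n) ℝ).mulVec y) = bilinR Mq x y)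
    (v : Fin N → (Fin n → ℝ)) (hv : ∀ i, v i ≠ 0)
    (hhypinj : Function.Injective (fun i => {x : Fin n → ℝ | bilinR Mq (v i) x = 0}))
    (hhyps : Set.range (fun i => {x : Fin n → ℝ | bilinR Mq (v i) x = 0})
      = {H : Set (Fin n → ℝ) | ∃ σ ∈ G, IsReflection σ ∧
          H = {x | (σ : Matrix (Fin n) (Fin n) ℝ).mulVec x = x}})
    (d : Fin n → ℕ) (hd : ∀ i, 1 ≤ d i)
    (hsum : (∑ i, ((d i : ℤ) - 1)) = N)
    (Δ : (Fin n → ℝ) → ℝ) (hΔ : ∀ x, Δ x = (∏ i, bilinR Mq (v i) x) ^ 2)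
    (κ : ℝ) (hκ : κ = ∏ i, bilinR Mq (v i) (v i) / 4)
    (hMac : ∀ s : ℝ, 0 ≤ s →
      (∫ x : Fin n → ℝ, Δ x ^ s * Real.exp (-(bilinR Mq x x)))
        = Real.pi ^ ((n : ℝ) / 2) * κ ^ s *
            (∏ i, Real.Gamma (d i * s + 1) / Real.Gamma (s + 1)) *
            Mq.det ^ (-(1 : ℝ) / 2)) :
    IsGreatest {y : ℝ | ∃ x : Fin n → ℝ, bilinR Mq x x = 1 ∧ y = Δ x}
      (κ * (∏ i, (d i : ℝ) ^ (d i : ℕ)) / (N : ℝ) ^ (N : ℕ)) :=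
  max_discriminant_on_sphere_general n N hn hN Mq hpos v hv d hd hsum Δ hΔ κ hκ hMac
end
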